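/- arXiv:1710.02744 — 6 statements merged into one kernel-verified Lean document; each statement's English description precedes it below -/
import Mathlib

section
/- Let n ≥ 1, let b be a lattice bridge of length n, and let r ∈ {1,…,n} be minimal such that b(r) = min{b(i) : 0 ≤ i ≤ n}. Then the cyclic shift b^(r) is a first passage bridge, and r is the unique element k of {1,…,n} for which b^(k) is a first passage bridge. -/
/-!
Because a bridge moves down by at most one per step, it first reaches `-1` at time `n` exactly
when it stays nonnegative before `n`. For `1 ≤ k ≤ n` the shift `b^(k)` reads `b (k + i) - b k`
until time `n - k` and `b (k + i - n) - 1 - b k` afterwards, so it stays nonnegative before `n`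
exactly when `b k` is weakly below all later values and strictly below all earlier values in
`{1, …, n}`, i.e. when `k` is the first place where the minimum is attained.
-/

/-- A lattice bridge of length `n`: integers `b 0, …, b n` with `b 0 = 0`,
`b n = -1`, and all increments at least `-1`. -/
def IsLatticeBridge (n : ℕ) (b : ℕ → ℤ) : Prop :=
  b 0 = 0 ∧ b n = -1 ∧ ∀ i < n, b (i + 1) - b i ≥ -1

/-- A first passage bridge: a lattice bridge that first hits `-1` at time `n`. -/
def IsFirstPassageBridge (n : ℕ) (b : ℕ → ℤ) : Prop :=
  IsLatticeBridge n b ∧ ∀ i, 1 ≤ i → i < n → b i ≠ -1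

/-- The extension of a lattice bridge: `b (n + i) = b i - 1` for `1 ≤ i ≤ n`. -/
def extBridge (n : ℕ) (b : ℕ → ℤ) (i : ℕ) : ℤ :=
  if i ≤ n then b i else b (i - n) - 1

/-- The cyclic shift `b^(k)` of a lattice bridge. -/
def shiftBridge (n : ℕ) (b : ℕ → ℤ) (k : ℕ) (i : ℕ) : ℤ :=
  extBridge n b (k + i) - extBridge n b k

/-- `k` is the first index in `{1, …, n}` at which `b` attains its minimum over `{1, …, n}`. -/
def IsFirstMinimum (n : ℕ) (b : ℕ → ℤ) (k : ℕ) : Prop :=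
  (∀ i, k ≤ i → i ≤ n → b k ≤ b i) ∧ ∀ j, 1 ≤ j → j < k → b k < b j

lemma isFirstMinimum_of_isLeast {n : ℕ} {b : ℕ → ℤ} {r : ℕ} (hrn : r ≤ n)
    (hrmin : ∀ i ≤ n, b r ≤ b i)
    (hrleast : ∀ k, 1 ≤ k → k ≤ n → (∀ i ≤ n, b k ≤ b i) → r ≤ k) :
    IsFirstMinimum n b r := by
  refine ⟨fun i _ hin => hrmin i hin, fun j hj1 hjr => lt_of_not_ge fun hjle => ?_⟩
  have := hrleast j hj1 (by omega) fun i hi => hjle.trans (hrmin i hi)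
  omega

lemma IsFirstMinimum.unique {n : ℕ} {b : ℕ → ℤ} {k r : ℕ}
    (hk : IsFirstMinimum n b k) (hr : IsFirstMinimum n b r)
    (hk1 : 1 ≤ k) (hkn : k ≤ n) (hr1 : 1 ≤ r) (hrn : r ≤ n) : k = r := by
  rcases lt_trichotomy k r with hlt | heq | hgt
  · exact absurd (hk.1 r hlt.le hrn) (not_le.2 (hr.2 k hk1 hlt))
  · exact heq
  · exact absurd (hr.1 k hgt.le hkn) (not_le.2 (hk.2 r hr1 hgt))

section extBridge

variable {n : ℕ} {b : ℕ → ℤ} {i k : ℕ}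

lemma extBridge_of_le (h : i ≤ n) : extBridge n b i = b i :=
  if_pos h

lemma extBridge_of_lt (h : n < i) : extBridge n b i = b (i - n) - 1 :=
  if_neg (not_le.2 h)

lemma shiftBridge_of_add_le (hkn : k ≤ n) (h : k + i ≤ n) :
    shiftBridge n b k i = b (k + i) - b k := by
  rw [shiftBridge, extBridge_of_le h, extBridge_of_le hkn]

lemma shiftBridge_of_lt_add (hkn : k ≤ n) (h : n < k + i) :
    shiftBridge n b k i = b (k + i - n) - 1 - b k := by
  rw [shiftBridge, extBridge_of_lt h, extBridge_of_le hkn]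

end extBridge

namespace IsLatticeBridge

variable {n : ℕ} {b : ℕ → ℤ}

lemma extBridge_step (hb : IsLatticeBridge n b) {i : ℕ} (hi : i < 2 * n) :
    extBridge n b (i + 1) - extBridge n b i ≥ -1 := by
  obtain ⟨h0, hn, hstep⟩ := hb
  rcases lt_trichotomy i n with hlt | rfl | hgt
  · rw [extBridge_of_le hlt, extBridge_of_le hlt.le]
    exact hstep i hlt
  · have h1 := hstep 0 (by omega)
    rw [zero_add, h0] at h1
    rw [extBridge_of_lt (by omega), extBridge_of_le le_rfl, Nat.add_sub_cancel_left, hn]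
    omega
  · have h1 := hstep (i - n) (by omega)
    rw [extBridge_of_lt (by omega), extBridge_of_lt hgt, show i + 1 - n = i - n + 1 by omega]
    omega

lemma isLatticeBridge_shiftBridge (hb : IsLatticeBridge n b) {k : ℕ} (hk1 : 1 ≤ k) (hkn : k ≤ n) :
    IsLatticeBridge n (shiftBridge n b k) := by
  refine ⟨by simp [shiftBridge], ?_, fun i hi => ?_⟩
  · rw [shiftBridge_of_lt_add hkn (by omega), Nat.add_sub_cancel]
    ring
  · have := hb.extBridge_step (i := k + i) (by omega)
    simp only [shiftBridge, ← add_assoc]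
    omega

lemma isFirstPassageBridge_iff (hb : IsLatticeBridge n b) :
    IsFirstPassageBridge n b ↔ ∀ i < n, 0 ≤ b i := by
  refine ⟨fun h i => ?_, fun h => ⟨hb, fun i _ hin => by have := h i hin; omega⟩⟩
  induction i with
  | zero => intro _; rw [hb.1]
  | succ m ih =>
    intro hm
    have h1 := ih (by omega)
    have h2 := hb.2.2 m (by omega)
    have h3 := h.2 (m + 1) (by omega) hm
    omega

lemma isFirstPassageBridge_shiftBridge_iff (hb : IsLatticeBridge n b) {k : ℕ}
    (hk1 : 1 ≤ k) (hkn : k ≤ n) :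
    IsFirstPassageBridge n (shiftBridge n b k) ↔ IsFirstMinimum n b k := by
  rw [(hb.isLatticeBridge_shiftBridge hk1 hkn).isFirstPassageBridge_iff]
  constructor
  · intro h
    refine ⟨fun i hki hin => ?_, fun j hj1 hjk => ?_⟩
    · have := h (i - k) (by omega)
      rw [shiftBridge_of_add_le hkn (by omega), Nat.add_sub_cancel' hki] at this
      omega
    · have := h (n + j - k) (by omega)
      rw [shiftBridge_of_lt_add hkn (by omega), show k + (n + j - k) - n = j by omega] at this
      omega
  · rintro ⟨hge, hlt⟩ i hin
    by_cases hki : k + i ≤ n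
    · have := hge (k + i) (by omega) hki
      rw [shiftBridge_of_add_le hkn hki]
      omega
    · have := hlt (k + i - n) (by omega) (by omega)
      rw [shiftBridge_of_lt_add hkn (by omega)]
      omega

end IsLatticeBridge

theorem stmt0_general (n : ℕ) (b : ℕ → ℤ) (hb : IsLatticeBridge n b)
    (r : ℕ) (hr1 : 1 ≤ r) (hrn : r ≤ n)
    (hrmin : ∀ i ≤ n, b r ≤ b i)
    (hrleast : ∀ k, 1 ≤ k → k ≤ n → (∀ i ≤ n, b k ≤ b i) → r ≤ k) :
    IsFirstPassageBridge n (shiftBridge n b r) ∧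
      ∀ k, 1 ≤ k → k ≤ n → IsFirstPassageBridge n (shiftBridge n b k) → k = r := by
  have hr : IsFirstMinimum n b r := isFirstMinimum_of_isLeast hrn hrmin hrleast
  refine ⟨(hb.isFirstPassageBridge_shiftBridge_iff hr1 hrn).2 hr, fun k hk1 hkn hk => ?_⟩
  exact ((hb.isFirstPassageBridge_shiftBridge_iff hk1 hkn).1 hk).unique hr hk1 hkn hr1 hrn

theorem stmt0 (n : ℕ) (hn : 1 ≤ n) (b : ℕ → ℤ) (hb : IsLatticeBridge n b)
    (r : ℕ) (hr1 : 1 ≤ r) (hrn : r ≤ n)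
    (hrmin : ∀ i ≤ n, b r ≤ b i)
    (hrleast : ∀ k, 1 ≤ k → k ≤ n → (∀ i ≤ n, b k ≤ b i) → r ≤ k) :
    IsFirstPassageBridge n (shiftBridge n b r) ∧
      ∀ k, 1 ≤ k → k ≤ n → IsFirstPassageBridge n (shiftBridge n b k) → k = r :=
  stmt0_general n b hb r hr1 hrn hrmin hrleast
end

section
/- Fix real numbers x_1,…,x_n and 1 ≤ k ≤ n. Let S_k = Σ_{j=1}^k x_{π(j)} where π is a uniformly random permutation of {1,…,n} (sampling without replacement), and let S*_k = Σ_{j=1}^k x_{Y_j} where Y_1,…,Y_k are independent and uniformly distributed on {1,…,n} (sampling with replacement). Then for every convex continuous function φ : ℝ → ℝ, E[φ(S_k)] ≤ E[φ(S*_k)]. -/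
/-!
Write a with-replacement sample `y : β → α` as `π ∘ ι ∘ c`, with `π` a permutation of the
population and `c : β → β` a pattern of repetitions among the positions `ι`. Every `y` arises,
and choosing one of its factorizations uniformly at random makes `π` uniform and independent
of `c`, with `c` weighted by the reciprocal of the number of factorizations of `ι ∘ c`.
These weights are invariant under relabelling `c ↦ τ ∘ c`, so for fixed `π` the weighted average
over `c` of the with-replacement sum `∑ b, x (π (ι (c b)))` is the without-replacement sum
`∑ b, x (π (ι b))`. Jensen's inequality for each `π`, summed over `π`, gives the theorem.
-/

open Finset Function Equiv

theorem Finset.sum_inv_card_fiber_mul {A B K : Type*} [Fintype A] [Fintype B] [DecidableEq B]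
    [Semifield K] [CharZero K] {f : A → B} (hf : Surjective f) (G : B → K) :
    ∑ a, (#{a' | f a' = f a} : K)⁻¹ * G (f a) = ∑ b, G b := by
  rw [← sum_fiberwise' univ f fun b => (#{a' | f a' = b} : K)⁻¹ * G b]
  refine sum_congr rfl fun b _ => ?_
  obtain ⟨a, rfl⟩ := hf b
  have hne : (#{a' | f a' = f a} : K) ≠ 0 := by
    exact_mod_cast (card_pos.2 ⟨a, by simp⟩).ne'
  rw [sum_const, nsmul_eq_mul, ← mul_assoc, mul_inv_cancel₀ hne, one_mul]

section Averaging

variable {β E : Type*} [Fintype β] [DecidableEq β] [AddCommGroup E] [Module ℝ E]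
  {u : (β → β) → ℝ}

lemma sum_smul_apply_of_comp_invariant (hu : ∀ (τ : Perm β) c, u (τ ∘ c) = u c) (v : β → E)
    (a : β) : ∑ c, u c • v (c a) = (Fintype.card β : ℝ)⁻¹ • (∑ c, u c) • ∑ b, v b := by
  set g : β → ℝ := fun i => ∑ c with c a = i, u c
  have hfib : ∑ c, u c • v (c a) = ∑ i, g i • v i := by
    rw [← sum_fiberwise univ (fun c => c a)]
    refine sum_congr rfl fun i _ => ?_
    rw [sum_smul]
    exact sum_congr rfl fun c hc => by rw [(mem_filter.1 hc).2]
  have hg : ∀ i j, g i = g j := fun i j =>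
    sum_equiv ((Equiv.refl β).arrowCongr (swap i j)) (fun c => by simp [swap_apply_eq_iff])
      (fun c _ => (hu (swap i j) c).symm)
  have htotal : ∑ i, g i = ∑ c, u c := by
    simp only [g]
    exact sum_fiberwise univ (fun c => c a) u
  have hcard : (Fintype.card β : ℝ) ≠ 0 := Nat.cast_ne_zero.2 (Fintype.card_pos_iff.2 ⟨a⟩).ne'
  have hgi : ∀ i, g i = (Fintype.card β : ℝ)⁻¹ * ∑ c, u c := fun i => by
    rw [← htotal, sum_congr rfl fun j _ => hg j i, sum_const, card_univ, nsmul_eq_mul,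
      inv_mul_cancel_left₀ hcard]
  simp_rw [hfib, hgi, mul_smul, ← smul_sum]

lemma sum_smul_sum_comp_of_comp_invariant (hu : ∀ (τ : Perm β) c, u (τ ∘ c) = u c)
    (v : β → E) : ∑ c, u c • ∑ b, v (c b) = (∑ c, u c) • ∑ b, v b := by
  cases isEmpty_or_nonempty β
  · simp
  have hcard : (Fintype.card β : ℝ) ≠ 0 := Nat.cast_ne_zero.2 Fintype.card_ne_zero
  simp_rw [smul_sum]
  rw [sum_comm]
  simp_rw [← smul_sum, sum_smul_apply_of_comp_invariant hu v]
  rw [sum_const, card_univ, ← Nat.cast_smul_eq_nsmul ℝ, smul_smul, mul_inv_cancel₀ hcard,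
    one_smul]

lemma ConvexOn.sum_mul_map_sum_le_of_comp_invariant {φ : E → ℝ} (hφ : ConvexOn ℝ Set.univ φ)
    (hu0 : ∀ c, 0 ≤ u c) (hu : ∀ (τ : Perm β) c, u (τ ∘ c) = u c) (hU : 0 < ∑ c, u c)
    (v : β → E) : (∑ c, u c) * φ (∑ b, v b) ≤ ∑ c, u c * φ (∑ b, v (c b)) := by
  have h := hφ.map_centerMass_le (t := univ) (p := fun c => ∑ b, v (c b)) (fun c _ => hu0 c) hU
    (fun _ _ => Set.mem_univ _)
  rw [centerMass, centerMass, sum_smul_sum_comp_of_comp_invariant hu, inv_smul_smul₀ hU.ne'] at h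
  simpa only [smul_eq_mul, comp_apply, ← le_inv_mul_iff₀ hU] using h

end Averaging

section Factorization

variable {α β : Type*} [Fintype α] [DecidableEq α] [Fintype β]

lemma exists_perm_comp_embedding_comp (ι : β ↪ α) (y : β → α) :
    ∃ p : Perm α × (β → β), ⇑p.1 ∘ ι ∘ p.2 = y := by
  cases isEmpty_or_nonempty β
  · exact ⟨(1, isEmptyElim), funext isEmptyElim⟩
  have hinj : Set.InjOn (ι ∘ invFun y) (univ.image y : Finset α) := by
    intro a ha a' ha' h
    simp only [coe_image, coe_univ, Set.image_univ] at ha ha'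
    rw [← invFun_eq ha, ← invFun_eq ha', ι.injective h]
  obtain ⟨σ, hσ⟩ := exists_equiv_extend_of_card_eq (t := univ) (by simp) (by simp) hinj
  let σ' : Perm α := σ.trans (subtypeUnivEquiv mem_univ)
  refine ⟨(σ'.symm, invFun y ∘ y), funext fun b => ?_⟩
  show σ'.symm (ι (invFun y (y b))) = y b
  rw [symm_apply_eq]
  exact (hσ (y b) (mem_image_of_mem y (mem_univ b))).symm

variable [DecidableEq β]

def numFactorizations (ι : β ↪ α) (y : β → α) : ℕ :=
  #{p : Perm α × (β → β) | ⇑p.1 ∘ ι ∘ p.2 = y}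

lemma numFactorizations_pos (ι : β ↪ α) (y : β → α) : 0 < numFactorizations ι y := by
  obtain ⟨p, hp⟩ := exists_perm_comp_embedding_comp ι y
  exact card_pos.2 ⟨p, by simpa using hp⟩

lemma numFactorizations_perm_comp (ι : β ↪ α) (π : Perm α) (y : β → α) :
    numFactorizations ι (π ∘ y) = numFactorizations ι y := by
  refine card_nbij' (fun p => (π⁻¹ * p.1, p.2)) (fun p => (π * p.1, p.2)) ?_ ?_
    (fun _ _ => by simp) (fun _ _ => by simp)
  · intro p hp
    simp_all [funext_iff]
  · intro p hp
    simp_all [funext_iff]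

lemma numFactorizations_comp_perm (ι : β ↪ α) (τ : Perm β) (c : β → β) :
    numFactorizations ι (ι ∘ τ ∘ c) = numFactorizations ι (ι ∘ c) := by
  have h : ⇑ι ∘ τ = τ.viaFintypeEmbedding ι ∘ ι := by
    funext b
    simp
  rw [← comp_assoc, h, comp_assoc, numFactorizations_perm_comp]

lemma sum_perm_sum_inv_numFactorizations_mul {K : Type*} [Semifield K] [CharZero K]
    (ι : β ↪ α) (G : (β → α) → K) :
    ∑ π : Perm α, ∑ c : β → β, (numFactorizations ι (ι ∘ c) : K)⁻¹ * G (π ∘ ι ∘ c)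
      = ∑ y, G y := by
  rw [← Fintype.sum_prod_type', ← sum_inv_card_fiber_mul
    (f := fun p : Perm α × (β → β) => ⇑p.1 ∘ ι ∘ p.2) (exists_perm_comp_embedding_comp ι) G]
  refine sum_congr rfl fun p _ => ?_
  rw [← numFactorizations_perm_comp ι p.1]
  rfl

end Factorization

theorem ConvexOn.sum_perm_map_sum_div_factorial_le {α β E : Type*} [Fintype α] [DecidableEq α]
    [Fintype β] [DecidableEq β] [AddCommGroup E] [Module ℝ E] {φ : E → ℝ}
    (hφ : ConvexOn ℝ Set.univ φ) (ι : β ↪ α) (x : α → E) :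
    (∑ π : Perm α, φ (∑ b, x (π (ι b)))) / (Fintype.card α).factorial
      ≤ (∑ y : β → α, φ (∑ b, x (y b))) / (Fintype.card α : ℝ) ^ Fintype.card β := by
  set u : (β → β) → ℝ := fun c => (numFactorizations ι (ι ∘ c) : ℝ)⁻¹
  have hu0 : ∀ c, 0 < u c := fun c => inv_pos.2 (Nat.cast_pos.2 (numFactorizations_pos ι _))
  have hu : ∀ (τ : Perm β) c, u (τ ∘ c) = u c := fun τ c => by
    simp only [u, numFactorizations_comp_perm]
  have hU : 0 < ∑ c, u c := sum_pos (fun c _ => hu0 c) ⟨id, mem_univ _⟩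
  have hUcard : ((Fintype.card α).factorial : ℝ) * ∑ c, u c
      = (Fintype.card α : ℝ) ^ Fintype.card β := by
    simpa [u, ← mul_sum, Fintype.card_perm] using
      sum_perm_sum_inv_numFactorizations_mul ι fun _ => (1 : ℝ)
  have hsum : (∑ c, u c) * ∑ π : Perm α, φ (∑ b, x (π (ι b)))
      ≤ ∑ y : β → α, φ (∑ b, x (y b)) := by
    rw [mul_sum, ← sum_perm_sum_inv_numFactorizations_mul ι]
    exact sum_le_sum fun π _ => hφ.sum_mul_map_sum_le_of_comp_invariant (fun c => (hu0 c).le)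
      hu hU (x ∘ π ∘ ι)
  have hfact : (0 : ℝ) < (Fintype.card α).factorial := by positivity
  rw [div_le_div_iff₀ hfact (by rw [← hUcard]; positivity)]
  calc (∑ π : Perm α, φ (∑ b, x (π (ι b)))) * (Fintype.card α : ℝ) ^ Fintype.card β
      = (Fintype.card α).factorial * ((∑ c, u c) * ∑ π : Perm α, φ (∑ b, x (π (ι b)))) := by
        rw [← hUcard]; ring
    _ ≤ (Fintype.card α).factorial * ∑ y : β → α, φ (∑ b, x (y b)) := by gcongr
    _ = (∑ y : β → α, φ (∑ b, x (y b))) * (Fintype.card α).factorial := mul_comm _ _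

theorem stmt3_general (n k : ℕ) (hkn : k ≤ n) (x : Fin n → ℝ)
    (φ : ℝ → ℝ) (hφ_convex : ConvexOn ℝ Set.univ φ) :
    (∑ π : Equiv.Perm (Fin n), φ (∑ j : Fin k, x (π (Fin.castLE hkn j)))) /
        (Nat.factorial n : ℝ)
      ≤ (∑ y : Fin k → Fin n, φ (∑ j : Fin k, x (y j))) / ((n : ℝ) ^ k) := by
  simpa using hφ_convex.sum_perm_map_sum_div_factorial_le (Fin.castLEEmb hkn) x

/-- Dilation (Aldous): if `S_k` is the sum of `k` draws without replacement from the
finite population `x 0, …, x (n-1)` (modeled by a uniformly random permutation) and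
`S*_k` is the sum of `k` draws with replacement (modeled by i.i.d. uniform indices),
then `E[φ(S_k)] ≤ E[φ(S*_k)]` for every convex continuous `φ : ℝ → ℝ`. -/
theorem stmt3 (n k : ℕ) (hk1 : 1 ≤ k) (hkn : k ≤ n) (x : Fin n → ℝ)
    (φ : ℝ → ℝ) (hφ_convex : ConvexOn ℝ Set.univ φ) (hφ_cont : Continuous φ) :
    (∑ π : Equiv.Perm (Fin n), φ (∑ j : Fin k, x (π (Fin.castLE hkn j)))) /
        (Nat.factorial n : ℝ)
      ≤ (∑ y : Fin k → Fin n, φ (∑ j : Fin k, x (y j))) / ((n : ℝ) ^ k) :=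
  stmt3_general n k hkn x φ hφ_convex
end

section
/- Let (Ω, F, P) be a probability space with filtration (F_j)_{0≤j≤n}, and let (X_j)_{0≤j≤n} be a bounded martingale adapted to (F_j) with X_0 = 0. Let b > 0 and v > 0 be such that almost surely X_{j+1} − X_j ≤ b for every 0 ≤ j ≤ n−1, and almost surely Σ_{j=0}^{n−1} E[(X_{j+1} − X_j)² | F_j] ≤ v. Then for every t ≥ 0, P(max_{0≤j≤n} X_j ≥ t) ≤ exp(−t² / (2v(1 + bt/(3v)))). -/
/-!
For `h ≥ 0` and `g = (e^{hb} - 1 - hb) / b²`, the bound `e^{hd} ≤ 1 + hd + g d²` for `d ≤ b`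
makes `exp (h X_j - g ⟨X⟩_j)` a nonnegative supermartingale, where `⟨X⟩_j` is the sum of the
conditional variances of the first `j` increments. Optional stopping at the first time it reaches
`exp (h t - g v)` bounds `P(max_j X_j ≥ t)` by `exp (-(h t - g v))`. The choice
`h = t / (v + b t / 3)`, together with `e^x - 1 - x ≤ x² / (2 (1 - x / 3))`, turns the exponent into
`t² / (2 v (1 + b t / (3 v)))`.
-/

open MeasureTheory Filter Real Finset
open scoped Nat

namespace Real

theorem exp_sub_one_sub_eq_sq_mul_integral (x : ℝ) :
    exp x - 1 - x = x ^ 2 * ∫ s in (0 : ℝ)..1, (1 - s) * exp (s * x) := by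
  rcases eq_or_ne x 0 with rfl | hx
  · simp
  have hderiv : ∀ s ∈ Set.uIcc (0 : ℝ) 1,
      HasDerivAt (fun s => ((1 - s) / x + 1 / x ^ 2) * exp (s * x))
        ((1 - s) * exp (s * x)) s := by
    intro s _
    have hexp : HasDerivAt (fun s => exp (s * x)) (exp (s * x) * x) s :=
      ((hasDerivAt_id s).mul_const x).exp.congr_deriv (by simp)
    refine (((((hasDerivAt_id' s).const_sub 1).div_const x).add_const (1 / x ^ 2)).mul
      hexp).congr_deriv ?_
    field_simp
    ring
  rw [intervalIntegral.integral_eq_sub_of_hasDerivAt hderiv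
    (Continuous.intervalIntegrable (by fun_prop) _ _)]
  field_simp
  simp only [sub_self, sub_zero, mul_zero, exp_zero]
  ring

theorem monotone_integral_one_sub_mul_exp_mul :
    Monotone fun x : ℝ => ∫ s in (0 : ℝ)..1, (1 - s) * exp (s * x) := by
  intro x y hxy
  refine intervalIntegral.integral_mono_on zero_le_one
    (Continuous.intervalIntegrable (by fun_prop) _ _)
    (Continuous.intervalIntegrable (by fun_prop) _ _) ?_
  intro s hs
  have : 0 ≤ 1 - s := by linarith [hs.2]
  gcongr
  exact hs.1

/-- Holds because `(exp x - 1 - x) / x ^ 2` is increasing. -/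
theorem exp_mul_le_of_le {h b d : ℝ} (hh : 0 ≤ h) (hb : b ≠ 0) (hd : d ≤ b) :
    exp (h * d) ≤ 1 + h * d + (exp (h * b) - 1 - h * b) / b ^ 2 * d ^ 2 := by
  set J := fun x : ℝ => ∫ s in (0 : ℝ)..1, (1 - s) * exp (s * x)
  have hJ : J (h * d) ≤ J (h * b) :=
    monotone_integral_one_sub_mul_exp_mul (mul_le_mul_of_nonneg_left hd hh)
  calc exp (h * d) = 1 + h * d + (h * d) ^ 2 * J (h * d) := by
        rw [← exp_sub_one_sub_eq_sq_mul_integral]; ring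
    _ ≤ 1 + h * d + (h * d) ^ 2 * J (h * b) := by gcongr
    _ = 1 + h * d + (h * b) ^ 2 * J (h * b) / b ^ 2 * d ^ 2 := by field_simp
    _ = 1 + h * d + (exp (h * b) - 1 - h * b) / b ^ 2 * d ^ 2 := by
        rw [← exp_sub_one_sub_eq_sq_mul_integral]

theorem exp_sub_one_sub_eq_tsum (x : ℝ) :
    exp x - 1 - x = ∑' k : ℕ, x ^ (k + 2) / (k + 2)! := by
  have hexp : exp x = ∑' k : ℕ, x ^ k / k ! := by
    rw [exp_eq_exp_ℝ, NormedSpace.exp_eq_tsum_div]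
  rw [hexp, ← (summable_pow_div_factorial x).sum_add_tsum_nat_add 2]
  simp only [sum_range_succ, range_one, sum_singleton, pow_zero, pow_one, Nat.factorial_zero,
    Nat.factorial_one, Nat.cast_one, div_one]
  ring

/-- The Taylor tail of `exp` is dominated termwise by a geometric series of ratio `x / 3`. -/
theorem exp_sub_one_sub_le {x : ℝ} (hx0 : 0 ≤ x) (hx3 : x < 3) :
    exp x - 1 - x ≤ x ^ 2 / (2 * (1 - x / 3)) := by
  have hr0 : 0 ≤ x / 3 := by positivity
  have hr1 : x / 3 < 1 := by linarith
  have hterm (k : ℕ) : x ^ (k + 2) / (k + 2)! ≤ x ^ 2 / 2 * (x / 3) ^ k := by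
    have hfact : (2 * 3 ^ k : ℝ) ≤ (k + 2)! := by
      have := Nat.factorial_mul_pow_le_factorial (m := 2) (n := k)
      rw [add_comm 2 k] at this
      exact_mod_cast this
    calc x ^ (k + 2) / (k + 2)! ≤ x ^ (k + 2) / (2 * 3 ^ k) := by gcongr
      _ = x ^ 2 / 2 * (x / 3) ^ k := by rw [div_pow]; ring
  calc exp x - 1 - x = ∑' k : ℕ, x ^ (k + 2) / (k + 2)! := exp_sub_one_sub_eq_tsum x
    _ ≤ ∑' k : ℕ, x ^ 2 / 2 * (x / 3) ^ k :=
        ((summable_pow_div_factorial x).comp_injective (add_left_injective 2)).tsum_le_tsum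
          hterm ((summable_geometric_of_lt_one hr0 hr1).mul_left _)
    _ = x ^ 2 / (2 * (1 - x / 3)) := by
        rw [tsum_mul_left, tsum_geometric_of_lt_one hr0 hr1]
        field_simp

theorem exists_bernstein_exponent {b v t : ℝ} (hb : 0 < b) (hv : 0 < v) (ht : 0 ≤ t) :
    ∃ h, 0 ≤ h ∧
      t ^ 2 / (2 * v * (1 + b * t / (3 * v))) ≤ h * t - (exp (h * b) - 1 - h * b) / b ^ 2 * v := by
  have hw : 0 < v + b * t / 3 := by positivity
  set h := t / (v + b * t / 3) with hh_def
  refine ⟨h, by positivity, ?_⟩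
  have hhb : h * b < 3 := by
    rw [div_mul_eq_mul_div, div_lt_iff₀ hw]
    nlinarith
  have hone : 1 - h * b / 3 = v / (v + b * t / 3) := by
    rw [hh_def]
    field_simp
    ring
  have hgv : (exp (h * b) - 1 - h * b) / b ^ 2 * v ≤ h * t / 2 := by
    calc (exp (h * b) - 1 - h * b) / b ^ 2 * v
        ≤ (h * b) ^ 2 / (2 * (1 - h * b / 3)) / b ^ 2 * v := by
          gcongr
          exact exp_sub_one_sub_le (by positivity) hhb
      _ = h * t / 2 := by
          rw [hone, hh_def]
          field_simp
  have hrate : t ^ 2 / (2 * v * (1 + b * t / (3 * v))) = h * t / 2 := by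
    rw [hh_def]
    field_simp
  linarith

end Real

namespace MeasureTheory

variable {Ω : Type*} {m0 : MeasurableSpace Ω} {μ : Measure Ω}

theorem integrable_exp_mul_of_le [IsFiniteMeasure μ] {D : Ω → ℝ} {b h : ℝ} (hh : 0 ≤ h)
    (hD : AEStronglyMeasurable D μ) (hDb : ∀ᵐ ω ∂μ, D ω ≤ b) :
    Integrable (fun ω => exp (h * D ω)) μ := by
  refine .of_bound (continuous_exp.comp_aestronglyMeasurable (hD.const_mul h)) (exp (h * b)) ?_
  filter_upwards [hDb] with ω hω
  rw [norm_of_nonneg (exp_pos _).le]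
  exact exp_le_exp.2 (mul_le_mul_of_nonneg_left hω hh)

theorem condExp_exp_mul_le [IsFiniteMeasure μ] {m : MeasurableSpace Ω} (hm : m ≤ m0)
    {D : Ω → ℝ} {b h : ℝ} (hb : b ≠ 0) (hh : 0 ≤ h) (hD : Integrable D μ)
    (hD2 : Integrable (fun ω => D ω ^ 2) μ) (hDb : ∀ᵐ ω ∂μ, D ω ≤ b) (hD0 : μ[D | m] =ᵐ[μ] 0) :
    μ[fun ω => exp (h * D ω) | m] ≤ᵐ[μ]
      fun ω => 1 + (exp (h * b) - 1 - h * b) / b ^ 2 * (μ[fun ω => D ω ^ 2 | m]) ω := by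
  set g := (exp (h * b) - 1 - h * b) / b ^ 2
  have hquad : μ[(fun _ => (1 : ℝ)) + h • D + g • fun ω => D ω ^ 2 | m] =ᵐ[μ]
      fun ω => 1 + g * (μ[fun ω => D ω ^ 2 | m]) ω := by
    filter_upwards [condExp_add ((integrable_const 1).add (hD.smul h)) (hD2.smul g) m,
      condExp_add (integrable_const 1) (hD.smul h) m, condExp_smul h D m,
      condExp_smul g (fun ω => D ω ^ 2) m, hD0] with ω h1 h2 h3 h4 h5
    simp [h1, h2, h3, h4, h5, condExp_const hm]
  refine (condExp_mono (integrable_exp_mul_of_le hh hD.aestronglyMeasurable hDb)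
    (((integrable_const 1).add (hD.smul h)).add (hD2.smul g)) ?_).trans_eq hquad
  filter_upwards [hDb] with ω hω
  exact exp_mul_le_of_le hh hb hω

/-- The predictable quadratic variation `⟨X⟩_j`. -/
noncomputable def condVarSum (μ : Measure Ω) (ℱ : Filtration ℕ m0) (X : ℕ → Ω → ℝ) (j : ℕ)
    (ω : Ω) : ℝ :=
  ∑ i ∈ range j, (μ[fun ω' => (X (i + 1) ω' - X i ω') ^ 2 | ℱ i]) ω

variable {ℱ : Filtration ℕ m0} {X : ℕ → Ω → ℝ}

theorem stronglyAdapted_condVarSum : StronglyAdapted ℱ (condVarSum μ ℱ X) := fun _ =>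
  Finset.stronglyMeasurable_fun_sum _ fun _ hi =>
    stronglyMeasurable_condExp.mono (ℱ.mono (mem_range.mp hi).le)

theorem condVarSum_succ (j : ℕ) :
    condVarSum μ ℱ X (j + 1) =
      condVarSum μ ℱ X j + μ[fun ω => (X (j + 1) ω - X j ω) ^ 2 | ℱ j] := by
  ext ω
  simp [condVarSum, sum_range_succ]

theorem ae_monotone_condVarSum : ∀ᵐ ω ∂μ, Monotone fun j => condVarSum μ ℱ X j ω := by
  have hnonneg : ∀ᵐ ω ∂μ, ∀ j, 0 ≤ (μ[fun ω => (X (j + 1) ω - X j ω) ^ 2 | ℱ j]) ω :=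
    ae_all_iff.2 fun j => condExp_nonneg (.of_forall fun ω => sq_nonneg _)
  filter_upwards [hnonneg] with ω hω
  refine monotone_nat_of_le_succ fun j => ?_
  simp only [condVarSum_succ, Pi.add_apply, le_add_iff_nonneg_right, hω]

theorem ae_condVarSum_nonneg : ∀ᵐ ω ∂μ, ∀ j, 0 ≤ condVarSum μ ℱ X j ω := by
  filter_upwards [ae_monotone_condVarSum] with ω hω j
  simpa [condVarSum] using hω (Nat.zero_le j)

theorem condVarSum_congr {Y : ℕ → Ω → ℝ} {k : ℕ} (h : ∀ i ≤ k, X i = Y i) :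
    condVarSum μ ℱ X k = condVarSum μ ℱ Y k := by
  ext ω
  refine sum_congr rfl fun i hi => ?_
  have hi : i < k := mem_range.mp hi
  rw [h i hi.le, h (i + 1) hi]

theorem Martingale.condExp_sub_succ_ae_eq_zero [IsFiniteMeasure μ] (hX : Martingale X ℱ μ)
    (j : ℕ) : μ[fun ω => X (j + 1) ω - X j ω | ℱ j] =ᵐ[μ] 0 := by
  filter_upwards [condExp_sub (hX.integrable (j + 1)) (hX.integrable j) (ℱ j),
    hX.condExp_ae_eq j.le_succ] with ω h1 h2
  rw [show (fun ω => X (j + 1) ω - X j ω) = X (j + 1) - X j from rfl, h1, Pi.sub_apply, h2,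
    condExp_of_stronglyMeasurable (ℱ.le j) (hX.stronglyMeasurable j) (hX.integrable j)]
  simp

theorem Martingale.integrable_sq_sub_succ [IsFiniteMeasure μ] (hX : Martingale X ℱ μ) {C : ℝ}
    (hC : ∀ j, ∀ᵐ ω ∂μ, |X j ω| ≤ C) (j : ℕ) :
    Integrable (fun ω => (X (j + 1) ω - X j ω) ^ 2) μ := by
  refine .of_bound (((hX.integrable (j + 1)).sub (hX.integrable j)).aestronglyMeasurable.pow 2)
    ((2 * C) ^ 2) ?_
  filter_upwards [hC (j + 1), hC j] with ω h1 h2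
  rw [norm_of_nonneg (sq_nonneg _), ← sq_abs]
  have : |X (j + 1) ω - X j ω| ≤ 2 * C := (abs_sub _ _).trans (by linarith)
  exact pow_le_pow_left₀ (abs_nonneg _) this 2

theorem Martingale.stronglyAdapted_exp_mul_sub_condVarSum (hX : Martingale X ℱ μ) (h g : ℝ) :
    StronglyAdapted ℱ fun j ω => exp (h * X j ω - g * condVarSum μ ℱ X j ω) := fun j =>
  continuous_exp.comp_stronglyMeasurable
    (((hX.stronglyMeasurable j).const_mul h).sub (stronglyAdapted_condVarSum j |>.const_mul g))

theorem Martingale.integrable_exp_mul_sub_condVarSum [IsFiniteMeasure μ] (hX : Martingale X ℱ μ)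
    {C : ℝ} (hC : ∀ j, ∀ᵐ ω ∂μ, |X j ω| ≤ C) {h g : ℝ} (hh : 0 ≤ h) (hg : 0 ≤ g) (j : ℕ) :
    Integrable (fun ω => exp (h * X j ω - g * condVarSum μ ℱ X j ω)) μ := by
  refine .of_bound (((hX.stronglyAdapted_exp_mul_sub_condVarSum h g) j).mono
    (ℱ.le j)).aestronglyMeasurable (exp (h * C)) ?_
  filter_upwards [hC j, ae_condVarSum_nonneg] with ω hCω hVω
  rw [norm_of_nonneg (exp_pos _).le, exp_le_exp]
  nlinarith [(abs_le.mp hCω).2, hVω j]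

theorem Martingale.condExp_exp_mul_sub_condVarSum_succ_le [IsFiniteMeasure μ]
    (hX : Martingale X ℱ μ) {C : ℝ} (hC : ∀ j, ∀ᵐ ω ∂μ, |X j ω| ≤ C) {b h : ℝ} (hb : b ≠ 0)
    (hh : 0 ≤ h) (hstep : ∀ j, ∀ᵐ ω ∂μ, X (j + 1) ω - X j ω ≤ b) (j : ℕ) :
    μ[fun ω => exp (h * X (j + 1) ω -
        (exp (h * b) - 1 - h * b) / b ^ 2 * condVarSum μ ℱ X (j + 1) ω) | ℱ j] ≤ᵐ[μ]
      fun ω => exp (h * X j ω - (exp (h * b) - 1 - h * b) / b ^ 2 * condVarSum μ ℱ X j ω) := by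
  set g := (exp (h * b) - 1 - h * b) / b ^ 2
  have hg : 0 ≤ g := div_nonneg (by linarith [add_one_le_exp (h * b)]) (sq_nonneg b)
  set D := fun ω => X (j + 1) ω - X j ω
  set W := μ[fun ω => D ω ^ 2 | ℱ j]
  set A := fun ω => exp (h * X j ω - g * condVarSum μ ℱ X j ω - g * W ω)
  have hD : Integrable D μ := (hX.integrable (j + 1)).sub (hX.integrable j)
  have hA : StronglyMeasurable[ℱ j] A := continuous_exp.comp_stronglyMeasurable
    ((((hX.stronglyMeasurable j).const_mul h).sub
      (stronglyAdapted_condVarSum j |>.const_mul g)).sub (stronglyMeasurable_condExp.const_mul g))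
  -- `⟨X⟩_{j+1}` is already `ℱ j`-measurable, so only `exp (h D)` stays inside the expectation
  have hsplit : (fun ω => exp (h * X (j + 1) ω - g * condVarSum μ ℱ X (j + 1) ω)) =
      A * fun ω => exp (h * D ω) := by
    ext ω
    simp only [condVarSum_succ, Pi.add_apply, Pi.mul_apply, A, D, W, ← exp_add]
    ring_nf
  have hint := hX.integrable_exp_mul_sub_condVarSum hC hh hg (j + 1)
  rw [hsplit] at hint ⊢
  filter_upwards [condExp_mul_of_stronglyMeasurable_left hA hint
      (integrable_exp_mul_of_le hh hD.aestronglyMeasurable (hstep j)),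
    condExp_exp_mul_le (ℱ.le j) hb hh hD (hX.integrable_sq_sub_succ hC j) (hstep j)
      (hX.condExp_sub_succ_ae_eq_zero j)] with ω h1 h2
  calc (μ[A * fun ω => exp (h * D ω) | ℱ j]) ω
      = A ω * (μ[fun ω => exp (h * D ω) | ℱ j]) ω := h1
    _ ≤ A ω * exp (g * W ω) :=
        mul_le_mul_of_nonneg_left (h2.trans (by linarith [add_one_le_exp (g * W ω)]))
          (exp_pos _).le
    _ = exp (h * X j ω - g * condVarSum μ ℱ X j ω) := by
        rw [← exp_add]
        ring_nf

theorem Martingale.supermartingale_exp_mul_sub_condVarSum [IsFiniteMeasure μ]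
    (hX : Martingale X ℱ μ) {C : ℝ} (hC : ∀ j, ∀ᵐ ω ∂μ, |X j ω| ≤ C) {b h : ℝ} (hb : b ≠ 0)
    (hh : 0 ≤ h) (hstep : ∀ j, ∀ᵐ ω ∂μ, X (j + 1) ω - X j ω ≤ b) :
    Supermartingale (fun j ω => exp (h * X j ω -
      (exp (h * b) - 1 - h * b) / b ^ 2 * condVarSum μ ℱ X j ω)) ℱ μ :=
  supermartingale_nat (hX.stronglyAdapted_exp_mul_sub_condVarSum _ _)
    (hX.integrable_exp_mul_sub_condVarSum hC hh
      (div_nonneg (by linarith [add_one_le_exp (h * b)]) (sq_nonneg b)))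
    (hX.condExp_exp_mul_sub_condVarSum_succ_le hC hb hh hstep)

theorem Supermartingale.mul_measure_le_sup_le_integral [IsFiniteMeasure μ] {Y : ℕ → Ω → ℝ}
    (hY : Supermartingale Y ℱ μ) (hnonneg : 0 ≤ Y) (ε : ℝ) (n : ℕ) :
    ε * (μ {ω | ε ≤ (range (n + 1)).sup' nonempty_range_add_one fun k => Y k ω}).toReal ≤
      ∫ ω, Y 0 ω ∂μ := by
  set E := {ω | ε ≤ (range (n + 1)).sup' nonempty_range_add_one fun k => Y k ω}
  set τ : Ω → WithTop ℕ := fun ω => (hittingBtwn Y {y | ε ≤ y} 0 n ω : ℕ)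
  have hτ : IsStoppingTime ℱ τ :=
    hY.stronglyAdapted.adapted.isStoppingTime_hittingBtwn measurableSet_Ici
  have hτn (ω : Ω) : τ ω ≤ n := WithTop.coe_le_coe.mpr (hittingBtwn_le ω)
  have hint : Integrable (stoppedValue Y τ) μ := integrable_stoppedValue ℕ hτ hY.integrable hτn
  have hE : MeasurableSet E := measurableSet_le measurable_const
    (Finset.measurable_range_sup'' fun k _ => ((hY.stronglyAdapted k).mono (ℱ.le k)).measurable)
  have hhit : ∀ ω ∈ E, ε ≤ stoppedValue Y τ ω := by
    intro ω (hω : ε ≤ _)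
    obtain ⟨k, hk, hεk⟩ := (le_sup'_iff _).mp hω
    exact stoppedValue_hittingBtwn_mem ⟨k, ⟨k.zero_le, Nat.lt_succ_iff.mp (mem_range.mp hk)⟩, hεk⟩
  have hstop : ∫ ω, stoppedValue Y τ ω ∂μ ≤ ∫ ω, Y 0 ω ∂μ := by
    have := hY.neg.expected_stoppedValue_mono (isStoppingTime_const ℱ 0) hτ
      (fun ω => WithTop.coe_le_coe.mpr (Nat.zero_le _)) hτn
    rwa [stoppedValue_const, show stoppedValue (-Y) τ = -stoppedValue Y τ from rfl,
      Pi.neg_apply, integral_neg', integral_neg', neg_le_neg_iff] at this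
  calc ε * (μ E).toReal ≤ ∫ ω in E, stoppedValue Y τ ω ∂μ := by
        simpa [mul_comm, measureReal_def] using
          setIntegral_ge_of_const_le hE (measure_ne_top μ E) hhit hint.integrableOn
    _ ≤ ∫ ω, stoppedValue Y τ ω ∂μ := setIntegral_le_integral hint (.of_forall fun ω => hnonneg _ ω)
    _ ≤ ∫ ω, Y 0 ω ∂μ := hstop

theorem martingale_min_of_condExp_succ [IsFiniteMeasure μ] (hX : Adapted ℱ X)
    (hint : ∀ j, Integrable (X j) μ) {n : ℕ} (hmart : ∀ j < n, μ[X (j + 1) | ℱ j] =ᵐ[μ] X j) :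
    Martingale (fun j => X (min j n)) ℱ μ := by
  refine martingale_nat (fun j => (hX (min j n)).stronglyMeasurable.mono (ℱ.mono (min_le_left j n)))
    (fun j => hint _) fun j => ?_
  rcases lt_or_ge j n with hj | hj
  · simp only [min_eq_left (show j + 1 ≤ n from hj), min_eq_left hj.le]
    exact (hmart j hj).symm
  · simp only [min_eq_right hj, min_eq_right (hj.trans j.le_succ)]
    rw [condExp_of_stronglyMeasurable (ℱ.le j) ((hX n).stronglyMeasurable.mono (ℱ.mono hj))
      (hint n)]

theorem Martingale.measure_le_sup_le_exp [IsProbabilityMeasure μ] (hX : Martingale X ℱ μ)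
    {C : ℝ} (hC : ∀ j, ∀ᵐ ω ∂μ, |X j ω| ≤ C) (hX0 : ∀ᵐ ω ∂μ, X 0 ω = 0) {b h : ℝ} (hb : b ≠ 0)
    (hh : 0 ≤ h) (hstep : ∀ j, ∀ᵐ ω ∂μ, X (j + 1) ω - X j ω ≤ b) {n : ℕ} {v : ℝ}
    (hvar : ∀ᵐ ω ∂μ, condVarSum μ ℱ X n ω ≤ v) (t : ℝ) :
    (μ {ω | t ≤ (range (n + 1)).sup' nonempty_range_add_one fun k => X k ω}).toReal ≤
      exp (-(h * t - (exp (h * b) - 1 - h * b) / b ^ 2 * v)) := by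
  set g := (exp (h * b) - 1 - h * b) / b ^ 2
  have hg : 0 ≤ g := div_nonneg (by linarith [add_one_le_exp (h * b)]) (sq_nonneg b)
  set Y := fun j ω => exp (h * X j ω - g * condVarSum μ ℱ X j ω)
  set ε := exp (h * t - g * v)
  have hY0 : ∫ ω, Y 0 ω ∂μ = 1 := by
    rw [integral_congr_ae (g := fun _ => 1) ?_, integral_const, probReal_univ, one_smul]
    filter_upwards [hX0] with ω hω
    simp [Y, hω, condVarSum]
  have hmax := (hX.supermartingale_exp_mul_sub_condVarSum hC hb hh hstep
    ).mul_measure_le_sup_le_integral (fun j ω => (exp_pos _).le) ε n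
  rw [hY0] at hmax
  have hsub : {ω | t ≤ (range (n + 1)).sup' nonempty_range_add_one fun k => X k ω} ≤ᵐ[μ]
      {ω | ε ≤ (range (n + 1)).sup' nonempty_range_add_one fun k => Y k ω} := by
    filter_upwards [hvar, ae_monotone_condVarSum] with ω hvω hmono (hω : t ≤ _)
    obtain ⟨k, hk, htk⟩ := (le_sup'_iff _).mp hω
    refine (le_sup'_iff _).mpr ⟨k, hk, exp_le_exp.2 ?_⟩
    have hVk : condVarSum μ ℱ X k ω ≤ v :=
      (hmono (Nat.lt_succ_iff.mp (mem_range.mp hk))).trans hvω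
    nlinarith
  calc _ ≤ (μ {ω | ε ≤ (range (n + 1)).sup' nonempty_range_add_one fun k => Y k ω}).toReal :=
        ENNReal.toReal_mono (measure_ne_top _ _) (measure_mono_ae hsub)
    _ ≤ ε⁻¹ := by
        rw [← one_div, le_div_iff₀ (exp_pos _), mul_comm]
        exact hmax
    _ = exp (-(h * t - g * v)) := (exp_neg _).symm

end MeasureTheory

/-- McDiarmid's martingale concentration inequality (Theorem 3.15 in McDiarmid 1998):
for a bounded martingale `(X_j)_{0 ≤ j ≤ n}` with `X_0 = 0`, increments bounded above
by `b`, and sum of conditional variances bounded by `v`,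
`P(max_{0 ≤ j ≤ n} X_j ≥ t) ≤ exp(-t² / (2v(1 + bt/(3v))))` for every `t ≥ 0`. -/
theorem stmt4 {Ω : Type*} {m0 : MeasurableSpace Ω} (μ : Measure Ω)
    [IsProbabilityMeasure μ] (ℱ : Filtration ℕ m0) (n : ℕ) (X : ℕ → Ω → ℝ)
    (hadapted : Adapted ℱ X)
    (hint : ∀ j, Integrable (X j) μ)
    (hmart : ∀ j < n, μ[X (j + 1) | ℱ j] =ᵐ[μ] X j)
    (hX0 : ∀ᵐ ω ∂μ, X 0 ω = 0)
    (hbdd : ∃ C : ℝ, ∀ j ≤ n, ∀ᵐ ω ∂μ, |X j ω| ≤ C)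
    (b v : ℝ) (hb : 0 < b) (hv : 0 < v)
    (hstep : ∀ j < n, ∀ᵐ ω ∂μ, X (j + 1) ω - X j ω ≤ b)
    (hvar : ∀ᵐ ω ∂μ,
      ∑ j ∈ Finset.range n, (μ[fun ω' => (X (j + 1) ω' - X j ω') ^ 2 | ℱ j]) ω ≤ v)
    (t : ℝ) (ht : 0 ≤ t) :
    (μ {ω | t ≤ (Finset.range (n + 1)).sup' Finset.nonempty_range_add_one
        (fun j => X j ω)}).toReal
      ≤ Real.exp (-t ^ 2 / (2 * v * (1 + b * t / (3 * v)))) := by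
  obtain ⟨h, hh, hrate⟩ := exists_bernstein_exponent hb hv ht
  obtain ⟨C, hC⟩ := hbdd
  set M := fun j => X (min j n)
  have hMX (k : ℕ) (hk : k ≤ n) : M k = X k := by simp only [M, min_eq_left hk]
  have hMstep (j : ℕ) : ∀ᵐ ω ∂μ, M (j + 1) ω - M j ω ≤ b := by
    rcases lt_or_ge j n with hj | hj
    · rw [hMX j hj.le, hMX (j + 1) hj]
      exact hstep j hj
    · refine .of_forall fun ω => ?_
      simp only [M, min_eq_right hj, min_eq_right (hj.trans j.le_succ), sub_self, hb.le]
  have hsup (ω : Ω) : (range (n + 1)).sup' nonempty_range_add_one (fun j => X j ω) =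
      (range (n + 1)).sup' nonempty_range_add_one fun j => M j ω :=
    sup'_congr _ rfl fun k hk => congrFun (hMX k (Nat.lt_succ_iff.mp (mem_range.mp hk))).symm ω
  simp only [hsup]
  refine ((martingale_min_of_condExp_succ hadapted hint hmart).measure_le_sup_le_exp
    (fun j => hC _ (min_le_right j n)) (by simpa [M] using hX0) hb.ne' hh hMstep
    (by rwa [condVarSum_congr hMX]) t).trans (exp_le_exp.2 ?_)
  rw [neg_div]
  linarith
end

section
/- In the truncated-sum model for sampling without replacement, both K_i = (nμ⁺ − R_i)/(n − i) and K̃_i = (iμ⁺ − R_i)/(n − i), defined for 0 ≤ i ≤ n−1, are martingales with respect to the filtration (F_i)_{0≤i≤n−1}. -/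
/-!
Because `π` is uniform, the draws not yet seen are exchangeable given `F_i`: every
`F_i`-measurable set is invariant under right multiplication by a transposition of two positions
`≥ i`. Hence `K_i`, the mean of the `n - i` truncated values still to be drawn, has the same sum
over every `F_i`-measurable set as the next draw, i.e. `K_i = E[f(C_{i+1}) | F_i]`, and
`E[K_{i+1} | F_i] = E[f(C_{i+2}) | F_i] = E[f(C_{i+1}) | F_i] = K_i`. Finally `K̃_i = K_i - μ⁺`.
-/

open MeasureTheory Finset
open scoped ENNReal

/-- The σ-algebra generated by the first `i` draws `C_1, …, C_i`, where
`C_j = c (π j)` for a permutation `π`. -/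
noncomputable def sigmaUpTo {n : ℕ} (c : Fin n → ℕ) (i : ℕ) :
    MeasurableSpace (Equiv.Perm (Fin n)) :=
  ⨆ j : Fin n, ⨆ _ : (j : ℕ) < i,
    MeasurableSpace.comap (fun π : Equiv.Perm (Fin n) => c (π j)) ⊤

lemma setIntegral_smul_count_finset {α : Type*} [Fintype α] [MeasurableSpace α]
    [DiscreteMeasurableSpace α] (a : ℝ≥0∞) (g : α → ℝ) (S : Finset α) :
    ∫ x in (S : Set α), g x ∂(a • Measure.count) = a.toReal * ∑ x ∈ S, g x := by
  rw [Measure.restrict_smul, integral_smul_measure, ← integral_indicator (.of_discrete),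
    integral_count, smul_eq_mul, sum_indicator_subset _ S.subset_univ]

lemma condExp_smul_count_ae_eq {α : Type*} {m : MeasurableSpace α} [Fintype α]
    [MeasurableSpace α] [DiscreteMeasurableSpace α] {a : ℝ≥0∞} (ha : a ≠ ∞) {f g : α → ℝ}
    (hf : StronglyMeasurable[m] f)
    (hfg : ∀ S : Finset α, MeasurableSet[m] (S : Set α) → ∑ x ∈ S, g x = ∑ x ∈ S, f x) :
    (a • Measure.count)[g | m] =ᵐ[a • Measure.count] f := by
  have := Measure.count.smul_finite (α := α) ha
  refine (ae_eq_condExp_of_forall_setIntegral_eq (fun s _ => .of_discrete) .of_finite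
    (fun _ _ _ => Integrable.of_finite.integrableOn) (fun s hs _ => ?_)
    hf.aestronglyMeasurable).symm
  obtain ⟨S, rfl⟩ := s.toFinite.exists_finset_coe
  rw [setIntegral_smul_count_finset, setIntegral_smul_count_finset, hfg S hs]

lemma Equiv.Perm.sum_apply_eq_of_mul_swap_mem_iff {α β : Type*} [DecidableEq α]
    [AddCommMonoid β] {S : Finset (Equiv.Perm α)} {a b : α}
    (hS : ∀ π, π * Equiv.swap a b ∈ S ↔ π ∈ S) (h : α → β) :
    ∑ π ∈ S, h (π a) = ∑ π ∈ S, h (π b) :=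
  sum_equiv (Equiv.mulRight (Equiv.swap a b)) (fun π => (hS π).symm)
    (fun π _ => by simp)

section SigmaUpTo

variable {n : ℕ} (c : Fin n → ℕ)

lemma sigmaUpTo_mono : Monotone (sigmaUpTo c) := fun _ _ hij =>
  iSup_mono fun _ => iSup_le fun hk => le_iSup_of_le (hk.trans_le hij) le_rfl

lemma measurable_apply_sigmaUpTo {i : ℕ} {j : Fin n} (hj : (j : ℕ) < i) :
    Measurable[sigmaUpTo c i] fun π : Equiv.Perm (Fin n) => c (π j) :=
  (comap_measurable _).mono (le_iSup₂_of_le j hj le_rfl) le_rfl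

variable {c}

lemma mul_mem_iff_of_measurableSet_sigmaUpTo {i : ℕ} {e : Equiv.Perm (Fin n)}
    (he : ∀ j : Fin n, (j : ℕ) < i → e j = j) {A : Set (Equiv.Perm (Fin n))}
    (hA : MeasurableSet[sigmaUpTo c i] A) (π : Equiv.Perm (Fin n)) : π * e ∈ A ↔ π ∈ A := by
  let invariant : MeasurableSpace (Equiv.Perm (Fin n)) :=
    { MeasurableSet' := fun A => (· * e) ⁻¹' A = A
      measurableSet_empty := rfl
      measurableSet_compl := fun A h => by simp only [Set.preimage_compl, h]
      measurableSet_iUnion := fun s h => by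
        simp only [Set.preimage_iUnion]
        exact Set.iUnion_congr h }
  have hle : sigmaUpTo c i ≤ invariant := by
    refine iSup₂_le fun j hj => ?_
    rintro _ ⟨B, -, rfl⟩
    ext π
    simp only [Set.mem_preimage, Equiv.Perm.mul_apply, he j hj]
  exact Set.ext_iff.mp (hle A hA) π

lemma sum_apply_eq_of_measurableSet_sigmaUpTo {β : Type*} [AddCommMonoid β] {i : ℕ}
    {S : Finset (Equiv.Perm (Fin n))} (hS : MeasurableSet[sigmaUpTo c i] (S : Set _))
    {j k : Fin n} (hj : i ≤ j) (hk : i ≤ k) (h : Fin n → β) :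
    ∑ π ∈ S, h (π j) = ∑ π ∈ S, h (π k) := by
  refine Equiv.Perm.sum_apply_eq_of_mul_swap_mem_iff
    (mul_mem_iff_of_measurableSet_sigmaUpTo (fun l hl => ?_) hS) h
  exact Equiv.swap_apply_of_ne_of_ne (Fin.ne_of_val_ne (by omega)) (Fin.ne_of_val_ne (by omega))

end SigmaUpTo

section TailSum

variable {n : ℕ} (c : Fin n → ℕ) (f : ℕ → ℝ)

/-- In the paper's 1-based indexing, `tailSum c f i = ∑_{k > i} f(C_k)`. -/
noncomputable def tailSum (i : ℕ) (π : Equiv.Perm (Fin n)) : ℝ :=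
  ∑ k ∈ univ.filter (fun k : Fin n => i ≤ (k : ℕ)), f (c (π k))

variable {c f}

lemma sum_tailSum_eq {i : ℕ} (hi : i < n) {S : Finset (Equiv.Perm (Fin n))}
    (hS : MeasurableSet[sigmaUpTo c i] (S : Set _)) :
    ∑ π ∈ S, tailSum c f i π = (n - i : ℝ) * ∑ π ∈ S, f (c (π ⟨i, hi⟩)) := by
  have hcard : #(univ.filter fun k : Fin n => i ≤ (k : ℕ)) = n - i := by
    rw [← Fin.card_Ici ⟨i, hi⟩]
    congr 1
    ext k
    simp [Fin.le_def]
  unfold tailSum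
  rw [sum_comm, sum_congr rfl fun k hk =>
    sum_apply_eq_of_measurableSet_sigmaUpTo hS (mem_filter.mp hk).2 le_rfl
      (fun j => f (c j)) (k := ⟨i, hi⟩), sum_const, hcard, nsmul_eq_mul,
    Nat.cast_sub hi.le]

lemma sum_tailSum_div_eq {i : ℕ} (hi : i < n) {S : Finset (Equiv.Perm (Fin n))}
    (hS : MeasurableSet[sigmaUpTo c i] (S : Set _)) :
    ∑ π ∈ S, tailSum c f i π / (n - i : ℝ) = ∑ π ∈ S, f (c (π ⟨i, hi⟩)) := by
  have hpos : (0 : ℝ) < n - i := sub_pos.mpr (by exact_mod_cast hi)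
  rw [← sum_div, sum_tailSum_eq hi hS, mul_div_cancel_left₀ _ hpos.ne']

lemma sum_tailSum_succ_div_eq {i : ℕ} (hi : i + 1 < n) {S : Finset (Equiv.Perm (Fin n))}
    (hS : MeasurableSet[sigmaUpTo c i] (S : Set _)) :
    ∑ π ∈ S, tailSum c f (i + 1) π / (n - (i + 1 : ℕ) : ℝ)
      = ∑ π ∈ S, tailSum c f i π / (n - i : ℝ) := by
  rw [sum_tailSum_div_eq hi (sigmaUpTo_mono c i.le_succ _ hS), sum_tailSum_div_eq (by omega) hS]
  exact sum_apply_eq_of_measurableSet_sigmaUpTo hS (by simp) le_rfl fun j => f (c j)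

end TailSum

section PartialSum

variable {n : ℕ} {c : Fin n → ℕ} {f : ℕ → ℝ} {R : ℕ → Equiv.Perm (Fin n) → ℝ}

lemma measurable_sigmaUpTo_of_step (hR0 : ∀ π, R 0 π = 0)
    (hRstep : ∀ i (hi : i < n) π, R (i + 1) π = R i π + f (c (π ⟨i, hi⟩))) :
    ∀ i ≤ n, Measurable[sigmaUpTo c i] (R i)
  | 0, _ => by
    rw [show R 0 = 0 from funext hR0]
    exact measurable_const
  | i + 1, hi => by
    rw [show R (i + 1) = fun π => R i π + f (c (π ⟨i, hi⟩)) from funext (hRstep i hi)]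
    exact ((measurable_sigmaUpTo_of_step hR0 hRstep i (by omega)).mono
      (sigmaUpTo_mono c i.le_succ) le_rfl).add
      (Measurable.of_discrete.comp (measurable_apply_sigmaUpTo c (j := ⟨i, hi⟩) (by simp)))

lemma sum_sub_eq_tailSum_of_step (hR0 : ∀ π, R 0 π = 0)
    (hRstep : ∀ i (hi : i < n) π, R (i + 1) π = R i π + f (c (π ⟨i, hi⟩))) (π) :
    ∀ i ≤ n, ∑ j, f (c j) - R i π = tailSum c f i π
  | 0, _ => by
    simp [hR0, tailSum, Equiv.sum_comp π fun j => f (c j)]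
  | i + 1, hi => by
    have hsplit : univ.filter (fun k : Fin n => i ≤ (k : ℕ))
        = insert ⟨i, hi⟩ (univ.filter fun k : Fin n => i + 1 ≤ (k : ℕ)) := by
      ext k
      simp only [mem_filter, mem_univ, true_and, mem_insert, Fin.ext_iff]
      omega
    have ih := sum_sub_eq_tailSum_of_step hR0 hRstep π i (by omega)
    rw [tailSum, hsplit, sum_insert (by simp)] at ih
    rw [hRstep i hi, tailSum]
    linarith

end PartialSum

theorem stmt7_general {n : ℕ} (t : ℕ) (c : Fin n → ℕ)
    [m0 : MeasurableSpace (Equiv.Perm (Fin n))] (hm0 : m0 = ⊤)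
    (μ : Measure (Equiv.Perm (Fin n)))
    (hμ : μ = ((Nat.factorial n : ℝ≥0∞))⁻¹ • Measure.count)
    (R : ℕ → Equiv.Perm (Fin n) → ℝ)
    (hR0 : ∀ π, R 0 π = 0)
    (hRstep : ∀ i (hi : i < n) (π : Equiv.Perm (Fin n)),
      R (i + 1) π = R i π +
        (if t + 1 ≤ c (π ⟨i, hi⟩) then (c (π ⟨i, hi⟩) : ℝ) - 1 else 0))
    (μplus : ℝ)
    (hμplus : μplus = (∑ j : Fin n, if t + 1 ≤ c j then (c j : ℝ) - 1 else 0) / n)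
    (K Kt : ℕ → Equiv.Perm (Fin n) → ℝ)
    (hK : ∀ i π, K i π = ((n : ℝ) * μplus - R i π) / ((n : ℝ) - i))
    (hKt : ∀ i π, Kt i π = ((i : ℝ) * μplus - R i π) / ((n : ℝ) - i)) :
    (∀ i, i + 1 ≤ n → StronglyMeasurable[sigmaUpTo c i] (K i)
        ∧ StronglyMeasurable[sigmaUpTo c i] (Kt i)
        ∧ Integrable (K i) μ ∧ Integrable (Kt i) μ)
      ∧ (∀ i, i + 2 ≤ n → μ[K (i + 1) | sigmaUpTo c i] =ᵐ[μ] K i)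
      ∧ (∀ i, i + 2 ≤ n → μ[Kt (i + 1) | sigmaUpTo c i] =ᵐ[μ] Kt i) := by
  subst hμ
  have : DiscreteMeasurableSpace (Equiv.Perm (Fin n)) := hm0 ▸ inferInstance
  set f : ℕ → ℝ := fun x => if t + 1 ≤ x then (x : ℝ) - 1 else 0
  have hfact : (n.factorial : ℝ≥0∞)⁻¹ ≠ ∞ := by simp [Nat.factorial_ne_zero]
  have : IsFiniteMeasure ((n.factorial : ℝ≥0∞)⁻¹ • (.count : Measure (Equiv.Perm (Fin n)))) :=
    Measure.count.smul_finite hfact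
  have hK_tail : ∀ i < n, K i = fun π => tailSum c f i π / (n - i : ℝ) := fun i hi =>
    funext fun π => by
      have hn : (n : ℝ) ≠ 0 := by exact_mod_cast (Nat.zero_lt_of_lt hi).ne'
      rw [hK, hμplus, mul_div_cancel₀ _ hn,
        sum_sub_eq_tailSum_of_step (f := f) hR0 hRstep π i hi.le]
  have hKt_sub : ∀ i < n, Kt i = fun π => K i π - μplus := fun i hi => funext fun π => by
    have hpos : (0 : ℝ) < n - i := sub_pos.mpr (by exact_mod_cast hi)
    rw [hK, hKt]
    field_simp
    ring
  have hmeas : ∀ i ≤ n, ∀ a : ℝ, Measurable[sigmaUpTo c i] fun π => (a - R i π) / (n - i : ℝ) :=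
    fun i hi _ => (measurable_const.sub
      (measurable_sigmaUpTo_of_step (f := f) hR0 hRstep i hi)).div_const _
  have hKmeas : ∀ i ≤ n, Measurable[sigmaUpTo c i] (K i) := fun i hi =>
    funext (hK i) ▸ hmeas i hi _
  have hKtmeas : ∀ i ≤ n, Measurable[sigmaUpTo c i] (Kt i) := fun i hi =>
    funext (hKt i) ▸ hmeas i hi _
  have hKsum : ∀ i, i + 2 ≤ n → ∀ S : Finset _, MeasurableSet[sigmaUpTo c i] (S : Set _) →
      ∑ π ∈ S, K (i + 1) π = ∑ π ∈ S, K i π := fun i hi S hS => by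
    rw [hK_tail i (by omega), hK_tail (i + 1) (by omega)]
    exact sum_tailSum_succ_div_eq hi hS
  refine ⟨fun i hi => ⟨(hKmeas i (by omega)).stronglyMeasurable,
    (hKtmeas i (by omega)).stronglyMeasurable, .of_finite, .of_finite⟩, fun i hi => ?_,
    fun i hi => ?_⟩
  · exact condExp_smul_count_ae_eq hfact (hKmeas i (by omega)).stronglyMeasurable
      (hKsum i hi)
  · refine condExp_smul_count_ae_eq hfact (hKtmeas i (by omega)).stronglyMeasurable
      fun S hS => ?_
    rw [hKt_sub i (by omega), hKt_sub (i + 1) (by omega), sum_sub_distrib, sum_sub_distrib,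
      hKsum i hi S hS]

/-- Truncated-sum model for sampling without replacement: both
`K_i = (n μ⁺ - R_i)/(n - i)` and `K̃_i = (i μ⁺ - R_i)/(n - i)`, `0 ≤ i ≤ n - 1`,
are martingales with respect to the filtration `(F_i)_{0 ≤ i ≤ n-1}`: each is
adapted, integrable, and satisfies `E[K_{i+1} | F_i] = K_i` a.s. for `i ≤ n - 2`. -/
theorem stmt7 {n : ℕ} (hn : 1 ≤ n) (t : ℕ) (c : Fin n → ℕ)
    [m0 : MeasurableSpace (Equiv.Perm (Fin n))] (hm0 : m0 = ⊤)
    (μ : Measure (Equiv.Perm (Fin n)))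
    (hμ : μ = ((Nat.factorial n : ℝ≥0∞))⁻¹ • Measure.count)
    (R : ℕ → Equiv.Perm (Fin n) → ℝ)
    (hR0 : ∀ π, R 0 π = 0)
    (hRstep : ∀ i (hi : i < n) (π : Equiv.Perm (Fin n)),
      R (i + 1) π = R i π +
        (if t + 1 ≤ c (π ⟨i, hi⟩) then (c (π ⟨i, hi⟩) : ℝ) - 1 else 0))
    (μplus : ℝ)
    (hμplus : μplus = (∑ j : Fin n, if t + 1 ≤ c j then (c j : ℝ) - 1 else 0) / n)
    (K Kt : ℕ → Equiv.Perm (Fin n) → ℝ)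
    (hK : ∀ i π, K i π = ((n : ℝ) * μplus - R i π) / ((n : ℝ) - i))
    (hKt : ∀ i π, Kt i π = ((i : ℝ) * μplus - R i π) / ((n : ℝ) - i)) :
    (∀ i, i + 1 ≤ n → StronglyMeasurable[sigmaUpTo c i] (K i)
        ∧ StronglyMeasurable[sigmaUpTo c i] (Kt i)
        ∧ Integrable (K i) μ ∧ Integrable (Kt i) μ)
      ∧ (∀ i, i + 2 ≤ n → μ[K (i + 1) | sigmaUpTo c i] =ᵐ[μ] K i)
      ∧ (∀ i, i + 2 ≤ n → μ[Kt (i + 1) | sigmaUpTo c i] =ᵐ[μ] Kt i) :=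
  stmt7_general t c (m0 := m0) hm0 μ hμ R hR0 hRstep μplus hμplus K Kt hK hKt
end

section
/- In the truncated-sum model for sampling without replacement, for every integer 0 ≤ s ≤ n one has E[(R_s − sμ⁺)²] ≤ s·(σ⁺)². -/
/-!
With `X k` the truncated excess of item `k` and `Y = X - μ⁺` its centred version,
`R_s - s μ⁺ = ∑_{i < s} Y (π i)`. Expanding the square, each diagonal term has mean
`n⁻¹ ∑ Y²`, while the off-diagonal terms all share one mean (the symmetric group is
2-transitive), which is `≤ 0` because `∑ Y = 0`. Hence the second moment is at most
`s n⁻¹ ∑ Y² ≤ s n⁻¹ ∑ X² ≤ s (σ⁺)²`, the last step because `X² ≤ c X` termwise.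
-/

open Finset

namespace Equiv.Perm

variable {α M : Type*} [DecidableEq α]

theorem exists_apply_eq_apply_eq {a b c d : α} (hab : a ≠ b) (hcd : c ≠ d) :
    ∃ σ : Perm α, σ c = a ∧ σ d = b := by
  have hd : swap a c d ≠ a := fun h => hcd (by simpa using congrArg (swap a c) h.symm)
  refine ⟨swap b (swap a c d) * swap a c, ?_, by simp [mul_apply]⟩
  rw [mul_apply, swap_apply_right]
  exact swap_apply_of_ne_of_ne hab (Ne.symm hd)

variable [Fintype α]

theorem sum_comp_apply_eq [AddCommMonoid M] (F : α → M) (a b : α) :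
    ∑ π : Perm α, F (π a) = ∑ π : Perm α, F (π b) := by
  simpa [mul_apply] using Equiv.sum_comp (Equiv.mulRight (swap a b)) fun π => F (π b)

theorem card_nsmul_sum_comp_apply [AddCommMonoid M] (F : α → M) (a : α) :
    Fintype.card α • ∑ π : Perm α, F (π a) = (Fintype.card α).factorial • ∑ k, F k := by
  calc Fintype.card α • ∑ π : Perm α, F (π a)
      = ∑ b : α, ∑ π : Perm α, F (π b) := by
        rw [← card_univ, ← sum_const]; exact sum_congr rfl fun b _ => sum_comp_apply_eq F a b
    _ = ∑ π : Perm α, ∑ b, F (π b) := sum_comm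
    _ = (Fintype.card α).factorial • ∑ k, F k := by
        simp only [Equiv.sum_comp, sum_const, card_univ, Fintype.card_perm]

theorem sum_comp_apply_apply_eq [AddCommMonoid M] (F : α → α → M) {a b c d : α}
    (hab : a ≠ b) (hcd : c ≠ d) :
    ∑ π : Perm α, F (π a) (π b) = ∑ π : Perm α, F (π c) (π d) := by
  obtain ⟨σ, hσc, hσd⟩ := exists_apply_eq_apply_eq hab hcd
  simpa [mul_apply, hσc, hσd] using Equiv.sum_comp (Equiv.mulRight σ) fun π => F (π c) (π d)

/-- The `card α - 1` off-diagonal terms of a row are equal and, since the row sums to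
`∑ π, Y (π a) * ∑ k, Y k = 0`, together cancel the nonnegative diagonal term. -/
theorem sum_apply_mul_apply_nonpos {Y : α → ℝ} (hY : ∑ k, Y k = 0) {a b : α} (hab : a ≠ b) :
    ∑ π : Perm α, Y (π a) * Y (π b) ≤ 0 := by
  have hrow : ∑ c, ∑ π : Perm α, Y (π a) * Y (π c) = 0 := by
    rw [sum_comm]
    exact sum_eq_zero fun π _ => by rw [← mul_sum, Equiv.sum_comp π Y, hY, mul_zero]
  rw [← add_sum_erase _ _ (mem_univ a),
    sum_congr rfl fun c hc => sum_comp_apply_apply_eq (fun x y => Y x * Y y)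
      (Ne.symm (mem_erase.mp hc).1) hab,
    sum_const, card_erase_of_mem (mem_univ a), card_univ, nsmul_eq_mul] at hrow
  have hdiag : 0 ≤ ∑ π : Perm α, Y (π a) * Y (π a) := sum_nonneg fun π _ => mul_self_nonneg _
  have hcard : (1 : ℝ) ≤ (Fintype.card α - 1 : ℕ) := by
    have := Fintype.one_lt_card_iff.mpr ⟨a, b, hab⟩
    exact_mod_cast Nat.le_sub_of_add_le this
  nlinarith

theorem card_mul_sum_sq_sum_apply_le {ι : Type*} [Fintype ι] {Y : α → ℝ} (hY : ∑ k, Y k = 0)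
    {e : ι → α} (he : Function.Injective e) :
    Fintype.card α * ∑ π : Perm α, (∑ i, Y (π (e i))) ^ 2
      ≤ Fintype.card ι * (Fintype.card α).factorial * ∑ k, Y k ^ 2 := by
  classical
  have hrow : ∀ i, ∑ j, ∑ π : Perm α, Y (π (e i)) * Y (π (e j))
      ≤ ∑ π : Perm α, Y (π (e i)) ^ 2 := fun i => by
    rw [← add_sum_erase _ _ (mem_univ i)]
    have : ∑ j ∈ univ.erase i, ∑ π : Perm α, Y (π (e i)) * Y (π (e j)) ≤ 0 :=
      sum_nonpos fun j hj => sum_apply_mul_apply_nonpos hY (he.ne (mem_erase.mp hj).1.symm)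
    simpa [sq] using this
  have hdiag : ∀ i, (Fintype.card α : ℝ) * ∑ π : Perm α, Y (π (e i)) ^ 2
      = (Fintype.card α).factorial * ∑ k, Y k ^ 2 := fun i => by
    simpa [nsmul_eq_mul] using card_nsmul_sum_comp_apply (fun k => Y k ^ 2) (e i)
  calc (Fintype.card α : ℝ) * ∑ π : Perm α, (∑ i, Y (π (e i))) ^ 2
      = Fintype.card α * ∑ i, ∑ j, ∑ π : Perm α, Y (π (e i)) * Y (π (e j)) := by
        simp only [sq, sum_mul_sum]
        rw [sum_comm]
        simp_rw [sum_comm (s := univ (α := Perm α))]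
    _ ≤ Fintype.card α * ∑ i, ∑ π : Perm α, Y (π (e i)) ^ 2 := by
        gcongr with i; exact hrow i
    _ = Fintype.card ι * (Fintype.card α).factorial * ∑ k, Y k ^ 2 := by
        simp [mul_sum, hdiag, mul_assoc]

end Equiv.Perm

theorem eq_sum_castLE_of_succ {n : ℕ} {R : ℕ → ℝ} {x : Fin n → ℝ} (h0 : R 0 = 0)
    (hstep : ∀ i (hi : i < n), R (i + 1) = R i + x ⟨i, hi⟩) (m : ℕ) (hm : m ≤ n) :
    R m = ∑ i : Fin m, x (Fin.castLE hm i) := by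
  induction m with
  | zero => simp [h0]
  | succ m ih => rw [hstep m hm, ih (Nat.le_of_succ_le hm), Fin.sum_univ_castSucc]; rfl

theorem sum_sub_mean_sq_le {ι : Type*} [Fintype ι] (X : ι → ℝ) :
    ∑ k, (X k - (∑ j, X j) / Fintype.card ι) ^ 2 ≤ ∑ k, X k ^ 2 := by
  set μ := (∑ j, X j) / Fintype.card ι
  have hμ : ∑ j, X j = Fintype.card ι * μ := by
    rcases (Fintype.card ι).eq_zero_or_pos with h | h
    · simp [Fintype.card_eq_zero_iff.mp h]
    · simp only [μ]; field_simp
  have hexpand : ∑ k, (X k - μ) ^ 2 = ∑ k, X k ^ 2 - Fintype.card ι * μ ^ 2 := by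
    simp only [sub_sq, sum_add_distrib, sum_sub_distrib, ← sum_mul, ← mul_sum, hμ, sum_const,
      card_univ, nsmul_eq_mul]
    ring
  rw [hexpand]
  nlinarith [sq_nonneg μ, (Fintype.card ι).cast_nonneg (α := ℝ)]

theorem truncated_excess_sq_le (t c : ℕ) :
    (if t + 1 ≤ c then (c : ℝ) - 1 else 0) ^ 2
      ≤ if t + 1 ≤ c then (c : ℝ) * ((c : ℝ) - 1) else 0 := by
  split_ifs with h
  · have : (1 : ℝ) ≤ c := by exact_mod_cast (Nat.le_add_left 1 t).trans h
    nlinarith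
  · simp

/-- Truncated-sum model for sampling without replacement: under the uniform measure
on permutations, `E[(R_s - s μ⁺)²] ≤ s (σ⁺)²` for every `0 ≤ s ≤ n`. -/
theorem stmt9 {n : ℕ} (hn : 1 ≤ n) (t : ℕ) (c : Fin n → ℕ)
    (R : ℕ → Equiv.Perm (Fin n) → ℝ)
    (hR0 : ∀ π, R 0 π = 0)
    (hRstep : ∀ i (hi : i < n) (π : Equiv.Perm (Fin n)),
      R (i + 1) π = R i π +
        (if t + 1 ≤ c (π ⟨i, hi⟩) then (c (π ⟨i, hi⟩) : ℝ) - 1 else 0))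
    (μplus : ℝ)
    (hμplus : μplus = (∑ j : Fin n, if t + 1 ≤ c j then (c j : ℝ) - 1 else 0) / n)
    (σplus2 : ℝ)
    (hσplus2 : σplus2 =
      (∑ j : Fin n, if t + 1 ≤ c j then (c j : ℝ) * ((c j : ℝ) - 1) else 0) / n)
    (s : ℕ) (hs : s ≤ n) :
    (∑ π : Equiv.Perm (Fin n), (R s π - (s : ℝ) * μplus) ^ 2) / (Nat.factorial n : ℝ)
      ≤ (s : ℝ) * σplus2 := by
  set X : Fin n → ℝ := fun k => if t + 1 ≤ c k then (c k : ℝ) - 1 else 0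
  set Y : Fin n → ℝ := fun k => X k - μplus
  have hn0 : (0 : ℝ) < n := by exact_mod_cast hn
  have hYsum : ∑ k, Y k = 0 := by
    simp [Y, sum_sub_distrib, hμplus, X, mul_div_cancel₀ _ hn0.ne']
  have hRY : ∀ π, R s π - s * μplus = ∑ i : Fin s, Y (π (Fin.castLE hs i)) := fun π => by
    rw [eq_sum_castLE_of_succ (R := (R · π)) (x := fun k => X (π k)) (hR0 π) (hRstep · · π)
      s hs]
    simp [Y, sum_sub_distrib]
  have hY2 : ∑ k, Y k ^ 2 ≤ n * σplus2 := by
    rw [hσplus2, mul_div_cancel₀ _ hn0.ne']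
    calc ∑ k, Y k ^ 2 ≤ ∑ k, X k ^ 2 := by simpa [Y, hμplus] using sum_sub_mean_sq_le X
      _ ≤ _ := sum_le_sum fun k _ => truncated_excess_sq_le t (c k)
  have hmoment := Equiv.Perm.card_mul_sum_sq_sum_apply_le hYsum (Fin.castLE_injective hs)
  simp only [Fintype.card_fin, ← hRY] at hmoment
  rw [div_le_iff₀ (by positivity)]
  refine le_of_mul_le_mul_left (hmoment.trans ?_) hn0
  calc (s : ℝ) * n.factorial * ∑ k, Y k ^ 2 ≤ s * n.factorial * (n * σplus2) := by gcongr
    _ = n * (s * σplus2 * n.factorial) := by ring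
end

section
/- In the truncated-sum model for sampling without replacement, for every integer s with 1 ≤ s ≤ n/2 and all reals ε > 0 and a > 0, P(max_{0≤i≤s} |iμ⁺ − R_i| > εa) ≤ 16·s·(σ⁺)² / (ε²a²). -/
/-!
Let `h = (c - 1) 1{c ≥ t + 1} - μ⁺` be the centred truncated values, so that
`i μ⁺ - R_i = -D_i` with `D_i(π) = ∑_{v < i} h (π v)`. Exchangeability of the positions of a
uniform permutation gives, for every `G` depending only on the first `i` positions and every
`j ≥ i`, `(n - i) E[G h(π j)] = -E[G D_i]` (because `∑ h = 0`), so `D_i / (n - i)` is a martingale.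
Kolmogorov's argument on the event where `|D_i|` first exceeds `λ = ε a` then yields
`λ² (n - s)² P(max_{i ≤ s} |D_i| > λ) ≤ n² E[D_s²]`, and `n ≤ 2 (n - s)`. Finally distinct
positions are negatively correlated, so `E[D_s²] ≤ s E[h²] ≤ s (σ⁺)²`.
-/

open Finset Equiv

theorem sq_mul_sum_sq_le_of_mul_sum_mul_eq {ι : Type*} (A : Finset ι) (g X : ι → ℝ) {p q : ℝ}
    (h : p * ∑ x ∈ A, g x * X x = q * ∑ x ∈ A, g x ^ 2) :
    q ^ 2 * ∑ x ∈ A, g x ^ 2 ≤ p ^ 2 * ∑ x ∈ A, X x ^ 2 := by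
  have hexp : ∑ x ∈ A, (p * X x - q * g x) ^ 2 =
      p ^ 2 * ∑ x ∈ A, X x ^ 2 - 2 * q * (p * ∑ x ∈ A, g x * X x) + q ^ 2 * ∑ x ∈ A, g x ^ 2 := by
    simp only [mul_sum, ← sum_sub_distrib, ← sum_add_distrib]
    exact sum_congr rfl fun _ _ => by ring
  have := sum_nonneg fun x (_ : x ∈ A) => sq_nonneg (p * X x - q * g x)
  rw [hexp, h] at this
  linarith

theorem sum_sq_sub_le_sum_sq {ι : Type*} (s : Finset ι) (f : ι → ℝ) {m : ℝ}
    (hm : ∑ j ∈ s, (f j - m) = 0) : ∑ j ∈ s, (f j - m) ^ 2 ≤ ∑ j ∈ s, f j ^ 2 := by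
  have : ∑ j ∈ s, f j ^ 2 = ∑ j ∈ s, (f j - m) ^ 2 + 2 * m * ∑ j ∈ s, (f j - m) + #s * m ^ 2 := by
    rw [mul_sum, ← nsmul_eq_mul, ← sum_const, ← sum_add_distrib, ← sum_add_distrib]
    exact sum_congr rfl fun j _ => by ring
  rw [this, hm]
  nlinarith [sq_nonneg m, (#s).cast_nonneg (α := ℝ)]

section Exchangeability

variable {α : Type*} [Fintype α] [DecidableEq α]

theorem sum_mul_apply_eq_of_mul_swap {G : Perm α → ℝ} (h : α → ℝ) {j k : α}
    (hG : ∀ π, G (π * swap j k) = G π) :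
    ∑ π, G π * h (π j) = ∑ π, G π * h (π k) := by
  rw [← Equiv.sum_comp (Equiv.mulRight (swap j k)) (fun π => G π * h (π k))]
  exact sum_congr rfl fun π _ => by simp [hG]

theorem card_mul_sum_mul_apply (K : Finset α) {G : Perm α → ℝ} (h : α → ℝ)
    (hG : ∀ k ∈ K, ∀ k' ∈ K, ∀ π, G (π * swap k k') = G π) {j : α} (hj : j ∈ K) :
    #K * ∑ π, G π * h (π j) = ∑ π, G π * ∑ k ∈ K, h (π k) := by
  calc (#K : ℝ) * ∑ π, G π * h (π j) = ∑ k ∈ K, ∑ π, G π * h (π k) := by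
        rw [← nsmul_eq_mul, ← sum_const]
        exact sum_congr rfl fun k hk => sum_mul_apply_eq_of_mul_swap h (hG j hj k hk)
    _ = ∑ π, G π * ∑ k ∈ K, h (π k) := by
        rw [sum_comm]
        simp only [mul_sum]

theorem card_mul_sum_apply (h : α → ℝ) (j : α) :
    Fintype.card α * ∑ π : Perm α, h (π j) = (Fintype.card α).factorial * ∑ a, h a := by
  have := card_mul_sum_mul_apply univ (G := fun _ => 1) h (by simp) (mem_univ j)
  simp only [one_mul, Equiv.sum_comp, card_univ] at this
  rw [this, sum_const, card_univ, Fintype.card_perm, nsmul_eq_mul]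

-- Averaging over `k ≠ j` gives `(#α - 1) ∑ h(π j) h(π k) = -∑ h(π j)²`.
theorem sum_apply_mul_apply_nonpos {h : α → ℝ} (hh : ∑ a, h a = 0) {j k : α} (hjk : j ≠ k) :
    ∑ π : Perm α, h (π j) * h (π k) ≤ 0 := by
  have hk : k ∈ univ.erase j := mem_erase.2 ⟨hjk.symm, mem_univ k⟩
  have hfix : ∀ k ∈ univ.erase j, ∀ k' ∈ univ.erase j, ∀ π : Perm α,
      h ((π * swap k k') j) = h (π j) := fun k hk k' hk' π => by
    rw [Perm.mul_apply, swap_apply_of_ne_of_ne (ne_of_mem_erase hk).symm (ne_of_mem_erase hk').symm]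
  have hrest : ∀ π : Perm α, ∑ k ∈ univ.erase j, h (π k) = - h (π j) := fun π => by
    rw [sum_erase_eq_sub (mem_univ j), Equiv.sum_comp π h, hh, zero_sub]
  have key := card_mul_sum_mul_apply (univ.erase j) (G := fun π => h (π j)) h hfix hk
  simp only [hrest, mul_neg, sum_neg_distrib] at key
  have hcard : (0 : ℝ) < #(univ.erase j) := by exact_mod_cast card_pos.2 ⟨k, hk⟩
  have hsq : 0 ≤ ∑ π : Perm α, h (π j) * h (π j) := sum_nonneg fun _ _ => mul_self_nonneg _
  nlinarith

theorem sum_sq_sum_apply_le {h : α → ℝ} (hh : ∑ a, h a = 0) (P : Finset α) :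
    ∑ π : Perm α, (∑ v ∈ P, h (π v)) ^ 2 ≤ ∑ v ∈ P, ∑ π : Perm α, h (π v) ^ 2 := by
  have hexp : ∀ π : Perm α, (∑ v ∈ P, h (π v)) ^ 2 =
      ∑ v ∈ P, (h (π v) ^ 2 + ∑ w ∈ P.erase v, h (π v) * h (π w)) := fun π => by
    rw [sq, sum_mul_sum]
    exact sum_congr rfl fun v hv => by rw [← add_sum_erase _ _ hv, sq]
  simp only [hexp]
  rw [sum_comm]
  refine sum_le_sum fun v _ => ?_
  rw [sum_add_distrib, sum_comm (s := univ)]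
  have : ∑ w ∈ P.erase v, ∑ π : Perm α, h (π v) * h (π w) ≤ 0 :=
    sum_nonpos fun w hw => sum_apply_mul_apply_nonpos hh (ne_of_mem_erase hw).symm
  linarith

theorem card_mul_sum_sq_sum_apply_le {h : α → ℝ} (hh : ∑ a, h a = 0) (P : Finset α) :
    Fintype.card α * ∑ π : Perm α, (∑ v ∈ P, h (π v)) ^ 2 ≤
      #P * (Fintype.card α).factorial * ∑ a, h a ^ 2 := by
  calc (Fintype.card α : ℝ) * ∑ π : Perm α, (∑ v ∈ P, h (π v)) ^ 2
      ≤ Fintype.card α * ∑ v ∈ P, ∑ π : Perm α, h (π v) ^ 2 :=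
        mul_le_mul_of_nonneg_left (sum_sq_sum_apply_le hh P) (by positivity)
    _ = ∑ v ∈ P, Fintype.card α * ∑ π : Perm α, (fun a => h a ^ 2) (π v) := mul_sum ..
    _ = #P * (Fintype.card α).factorial * ∑ a, h a ^ 2 := by
        rw [sum_congr rfl fun v _ => card_mul_sum_apply (fun a => h a ^ 2) v, sum_const,
          nsmul_eq_mul, mul_assoc]

end Exchangeability

section PrefixSums

variable {n : ℕ}

def PrefixDetermined {β : Type*} (i : ℕ) (G : Perm (Fin n) → β) : Prop :=
  ∀ π σ : Perm (Fin n), (∀ m : Fin n, (m : ℕ) < i → π m = σ m) → G π = G σ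

theorem PrefixDetermined.apply_mul_swap {β : Type*} {i : ℕ} {G : Perm (Fin n) → β}
    (hG : PrefixDetermined i G) {k k' : Fin n} (hk : i ≤ k) (hk' : i ≤ k') (π : Perm (Fin n)) :
    G (π * swap k k') = G π :=
  hG _ _ fun m hm => by
    rw [Perm.mul_apply, swap_apply_of_ne_of_ne (by rintro rfl; omega) (by rintro rfl; omega)]

def prefixSum (h : Fin n → ℝ) (i : ℕ) (π : Perm (Fin n)) : ℝ :=
  ∑ v ∈ univ.filter (fun v : Fin n => (v : ℕ) < i), h (π v)

theorem prefixSum_zero (h : Fin n → ℝ) (π : Perm (Fin n)) : prefixSum h 0 π = 0 := by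
  simp [prefixSum]

theorem prefixSum_succ (h : Fin n → ℝ) {i : ℕ} (hi : i < n) (π : Perm (Fin n)) :
    prefixSum h (i + 1) π = prefixSum h i π + h (π ⟨i, hi⟩) := by
  have : univ.filter (fun v : Fin n => (v : ℕ) < i + 1) =
      insert ⟨i, hi⟩ (univ.filter fun v : Fin n => (v : ℕ) < i) := by
    ext v
    simp only [mem_filter, mem_univ, true_and, mem_insert, Fin.ext_iff]
    omega
  rw [prefixSum, this, sum_insert (by simp), add_comm, prefixSum]

theorem prefixSum_sub_const (f : Fin n → ℝ) (m : ℝ) {i : ℕ} (hi : i ≤ n)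
    (π : Perm (Fin n)) : prefixSum (fun v => f v - m) i π = prefixSum f i π - i * m := by
  rw [prefixSum, sum_sub_distrib, sum_const, Fin.card_filter_val_lt, min_eq_right hi,
    nsmul_eq_mul, prefixSum]

theorem eq_prefixSum_of_eq_add {R : ℕ → Perm (Fin n) → ℝ} {f : Fin n → ℝ}
    (h0 : ∀ π, R 0 π = 0) (hstep : ∀ i (hi : i < n) π, R (i + 1) π = R i π + f (π ⟨i, hi⟩))
    {i : ℕ} (hi : i ≤ n) (π : Perm (Fin n)) : R i π = prefixSum f i π := by
  induction i with
  | zero => rw [h0, prefixSum_zero]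
  | succ i ih => rw [hstep i hi π, ih (by omega), prefixSum_succ f hi]

theorem prefixDetermined_prefixSum (h : Fin n → ℝ) {m i : ℕ} (hmi : m ≤ i) :
    PrefixDetermined i (prefixSum h m) :=
  fun π σ hag => sum_congr rfl fun v hv => by
    rw [hag v (lt_of_lt_of_le (mem_filter.1 hv).2 hmi)]

theorem sub_mul_sum_mul_apply_eq_neg {h : Fin n → ℝ} (hh : ∑ v, h v = 0) {i : ℕ}
    {G : Perm (Fin n) → ℝ} (hG : PrefixDetermined i G) {j : Fin n} (hj : i ≤ j) :
    ((n : ℝ) - i) * ∑ π, G π * h (π j) = -∑ π, G π * prefixSum h i π := by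
  have hcard : #(univ.filter fun v : Fin n => i ≤ (v : ℕ)) = n - i := by
    have := card_filter_add_card_filter_not (s := univ) (fun v : Fin n => (v : ℕ) < i)
    simp only [not_lt, card_univ, Fintype.card_fin, Fin.card_filter_val_lt] at this
    omega
  have htail : ∀ π : Perm (Fin n),
      ∑ k ∈ univ.filter (fun k : Fin n => i ≤ (k : ℕ)), h (π k) = -prefixSum h i π := by
    intro π
    have := sum_filter_add_sum_filter_not univ (fun v : Fin n => (v : ℕ) < i) (fun v => h (π v))
    simp only [not_lt, Equiv.sum_comp π h, hh] at this
    rw [prefixSum]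
    linarith
  have key := card_mul_sum_mul_apply (univ.filter fun v : Fin n => i ≤ (v : ℕ)) h
    (fun k hk k' hk' => hG.apply_mul_swap (mem_filter.1 hk).2 (mem_filter.1 hk').2)
    (mem_filter.2 ⟨mem_univ j, hj⟩)
  rw [hcard, Nat.cast_sub (hj.trans j.2.le)] at key
  simp only [key, htail, mul_neg, sum_neg_distrib]

/-- `D_i / (n - i)` is a martingale for the filtration of prefixes of `π`. -/
theorem sub_mul_sum_mul_prefixSum {h : Fin n → ℝ} (hh : ∑ v, h v = 0) {i : ℕ}
    {G : Perm (Fin n) → ℝ} (hG : PrefixDetermined i G) {s : ℕ} (his : i ≤ s) (hsn : s ≤ n) :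
    ((n : ℝ) - i) * ∑ π, G π * prefixSum h s π = ((n : ℝ) - s) * ∑ π, G π * prefixSum h i π := by
  induction s, his using Nat.le_induction with
  | base => rfl
  | succ s his ih =>
    have hs : s < n := hsn
    have step := sub_mul_sum_mul_apply_eq_neg hh hG (j := ⟨s, hs⟩) his
    simp only [prefixSum_succ h hs, mul_add, sum_add_distrib]
    rw [ih hs.le, step]
    push_cast
    ring

theorem card_mul_sum_sq_prefixSum_le {h : Fin n → ℝ} (hh : ∑ v, h v = 0) {s : ℕ} (hsn : s ≤ n) :
    (n : ℝ) * ∑ π, prefixSum h s π ^ 2 ≤ s * n.factorial * ∑ v, h v ^ 2 := by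
  have := card_mul_sum_sq_sum_apply_le hh (univ.filter fun v : Fin n => (v : ℕ) < s)
  rwa [Fintype.card_fin, Fin.card_filter_val_lt, min_eq_right hsn] at this

end PrefixSums

section FirstExceedance

variable {Ω : Type*} [Fintype Ω]

open Classical in
noncomputable def firstExceedance (D : ℕ → Ω → ℝ) (c : ℝ) (i : ℕ) : Finset Ω :=
  univ.filter fun ω => c < |D i ω| ∧ ∀ m < i, |D m ω| ≤ c

theorem mem_firstExceedance {D : ℕ → Ω → ℝ} {c : ℝ} {i : ℕ} {ω : Ω} :
    ω ∈ firstExceedance D c i ↔ c < |D i ω| ∧ ∀ m < i, |D m ω| ≤ c := by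
  simp [firstExceedance]

theorem pairwiseDisjoint_firstExceedance (D : ℕ → Ω → ℝ) (c : ℝ) (S : Set ℕ) :
    S.PairwiseDisjoint (firstExceedance D c) := by
  intro i _ j _ hij
  rw [Function.onFun, disjoint_left]
  intro ω hi hj
  rw [mem_firstExceedance] at hi hj
  rcases hij.lt_or_gt with h | h
  · exact (hj.2 i h).not_gt hi.1
  · exact (hi.2 j h).not_gt hj.1

theorem filter_exists_lt_abs_eq_biUnion [DecidableEq Ω] (D : ℕ → Ω → ℝ) (c : ℝ) (s : ℕ)
    [DecidablePred fun ω : Ω => ∃ i ≤ s, c < |D i ω|] :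
    univ.filter (fun ω => ∃ i ≤ s, c < |D i ω|) =
      (range (s + 1)).biUnion (firstExceedance D c) := by
  ext ω
  simp only [mem_filter, mem_univ, true_and, mem_biUnion, mem_range, Nat.lt_succ_iff,
    mem_firstExceedance]
  constructor
  · intro h
    refine ⟨Nat.find h, (Nat.find_spec h).1, (Nat.find_spec h).2, fun m hm => ?_⟩
    exact not_lt.1 fun hc => Nat.find_min h hm ⟨hm.le.trans (Nat.find_spec h).1, hc⟩
  · rintro ⟨i, his, hi, -⟩
    exact ⟨i, his, hi⟩

end FirstExceedance

section Maximal

variable {n : ℕ} {h : Fin n → ℝ}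

theorem card_firstExceedance_mul_le (hh : ∑ v, h v = 0) {c : ℝ} (hc : 0 ≤ c) {i s : ℕ}
    (his : i ≤ s) (hsn : s ≤ n) :
    #(firstExceedance (prefixSum h) c i) * (c ^ 2 * ((n : ℝ) - s) ^ 2) ≤
      (n : ℝ) ^ 2 * ∑ π ∈ firstExceedance (prefixSum h) c i, prefixSum h s π ^ 2 := by
  classical
  set A := firstExceedance (prefixSum h) c i
  have hA : PrefixDetermined i (· ∈ A) := by
    intro π σ hag
    have hD : ∀ m ≤ i, prefixSum h m π = prefixSum h m σ :=
      fun m hm => prefixDetermined_prefixSum h hm π σ hag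
    simp only [A, mem_firstExceedance, hD i le_rfl]
    exact propext (and_congr_right' (forall₂_congr fun m hm => by rw [hD m hm.le]))
  have hG : PrefixDetermined i fun π => if π ∈ A then prefixSum h i π else 0 := by
    intro π σ hag
    simp only [hA π σ hag, prefixDetermined_prefixSum h le_rfl π σ hag]
  have hmart := sub_mul_sum_mul_prefixSum hh hG his hsn
  simp only [ite_mul, zero_mul, sum_ite_mem, univ_inter] at hmart
  have hcs := sq_mul_sum_sq_le_of_mul_sum_mul_eq A (prefixSum h i) (prefixSum h s)
    (by simpa only [sq] using hmart)
  have hlow : #A * c ^ 2 ≤ ∑ π ∈ A, prefixSum h i π ^ 2 := by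
    rw [← nsmul_eq_mul]
    refine card_nsmul_le_sum _ _ _ fun π hπ => ?_
    rw [← sq_abs (prefixSum h i π)]
    exact pow_le_pow_left₀ hc (mem_firstExceedance.1 hπ).1.le 2
  have hin : (0 : ℝ) ≤ n - i ∧ (n : ℝ) - i ≤ n := by
    constructor
    · have : (i : ℝ) ≤ n := by exact_mod_cast his.trans hsn
      linarith
    · linarith [(i.cast_nonneg : (0 : ℝ) ≤ i)]
  calc (#A : ℝ) * (c ^ 2 * ((n : ℝ) - s) ^ 2) = ((n : ℝ) - s) ^ 2 * (#A * c ^ 2) := by ring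
    _ ≤ ((n : ℝ) - s) ^ 2 * ∑ π ∈ A, prefixSum h i π ^ 2 := by gcongr
    _ ≤ ((n : ℝ) - i) ^ 2 * ∑ π ∈ A, prefixSum h s π ^ 2 := hcs
    _ ≤ (n : ℝ) ^ 2 * ∑ π ∈ A, prefixSum h s π ^ 2 := by
        gcongr
        exacts [hin.1, hin.2]

theorem card_filter_exists_lt_abs_prefixSum_mul_le (hh : ∑ v, h v = 0) {c : ℝ} (hc : 0 ≤ c)
    {s : ℕ} (hsn : s ≤ n) [DecidablePred fun π : Perm (Fin n) => ∃ i ≤ s, c < |prefixSum h i π|] :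
    #(univ.filter fun π : Perm (Fin n) => ∃ i ≤ s, c < |prefixSum h i π|) *
        (c ^ 2 * ((n : ℝ) - s) ^ 2) ≤
      (n : ℝ) ^ 2 * ∑ π, prefixSum h s π ^ 2 := by
  have hdisj := pairwiseDisjoint_firstExceedance (prefixSum h) c ↑(range (s + 1))
  rw [filter_exists_lt_abs_eq_biUnion, card_biUnion hdisj]
  push_cast
  rw [sum_mul]
  calc ∑ i ∈ range (s + 1), (#(firstExceedance (prefixSum h) c i) : ℝ) * (c ^ 2 * ((n : ℝ) - s) ^ 2)
      ≤ ∑ i ∈ range (s + 1),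
          (n : ℝ) ^ 2 * ∑ π ∈ firstExceedance (prefixSum h) c i, prefixSum h s π ^ 2 :=
        sum_le_sum fun i hi =>
          card_firstExceedance_mul_le hh hc (Nat.lt_succ_iff.1 (mem_range.1 hi)) hsn
    _ = (n : ℝ) ^ 2 * ∑ π ∈ (range (s + 1)).biUnion (firstExceedance (prefixSum h) c),
          prefixSum h s π ^ 2 := by
        rw [sum_biUnion hdisj, mul_sum]
    _ ≤ (n : ℝ) ^ 2 * ∑ π, prefixSum h s π ^ 2 := by
        gcongr
        exact subset_univ _

theorem card_filter_exists_lt_abs_prefixSum_div_le (hh : ∑ v, h v = 0) (hn : 0 < n) {c : ℝ}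
    (hc : 0 < c) {s : ℕ} (hs : 2 * s ≤ n)
    [DecidablePred fun π : Perm (Fin n) => ∃ i ≤ s, c < |prefixSum h i π|] :
    #(univ.filter fun π : Perm (Fin n) => ∃ i ≤ s, c < |prefixSum h i π|) / n.factorial ≤
      4 * s * ((∑ v, h v ^ 2) / n) / c ^ 2 := by
  set K : ℝ := (#(univ.filter fun π : Perm (Fin n) => ∃ i ≤ s, c < |prefixSum h i π|) : ℝ)
  have hmax := card_filter_exists_lt_abs_prefixSum_mul_le hh hc.le (s := s) (by omega)
  have hvar := card_mul_sum_sq_prefixSum_le hh (s := s) (by omega)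
  have hnR : (0 : ℝ) < n := by exact_mod_cast hn
  have hns : (n : ℝ) ≤ 2 * ((n : ℝ) - s) := by
    have : (2 * s : ℝ) ≤ n := by exact_mod_cast hs
    linarith
  have hns' : 0 < ((n : ℝ) - s) ^ 2 := by nlinarith
  rw [div_le_div_iff₀ (by positivity) (by positivity), mul_div_assoc', div_mul_eq_mul_div,
    le_div_iff₀ hnR]
  refine le_of_mul_le_mul_right ?_ hns'
  calc K * c ^ 2 * n * ((n : ℝ) - s) ^ 2 = n * (K * (c ^ 2 * ((n : ℝ) - s) ^ 2)) := by ring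
    _ ≤ n * (n ^ 2 * ∑ π, prefixSum h s π ^ 2) := by gcongr
    _ = n ^ 2 * (n * ∑ π, prefixSum h s π ^ 2) := by ring
    _ ≤ (2 * ((n : ℝ) - s)) ^ 2 * (s * n.factorial * ∑ v, h v ^ 2) := by gcongr
    _ = 4 * s * (∑ v, h v ^ 2) * n.factorial * ((n : ℝ) - s) ^ 2 := by ring

end Maximal

theorem sum_sq_truncated_le {ι : Type*} (s : Finset ι) (c : ι → ℕ) (t : ℕ) :
    ∑ j ∈ s, (if t + 1 ≤ c j then (c j : ℝ) - 1 else 0) ^ 2 ≤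
      ∑ j ∈ s, if t + 1 ≤ c j then (c j : ℝ) * ((c j : ℝ) - 1) else 0 := by
  refine sum_le_sum fun j _ => ?_
  split_ifs with hj
  · have : (1 : ℝ) ≤ c j := by exact_mod_cast (Nat.le_add_left 1 t).trans hj
    nlinarith
  · simp

open Classical in
theorem stmt10_general {n : ℕ} (hn : 1 ≤ n) (t : ℕ) (c : Fin n → ℕ)
    (R : ℕ → Equiv.Perm (Fin n) → ℝ)
    (hR0 : ∀ π, R 0 π = 0)
    (hRstep : ∀ i (hi : i < n) (π : Equiv.Perm (Fin n)),
      R (i + 1) π = R i π +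
        (if t + 1 ≤ c (π ⟨i, hi⟩) then (c (π ⟨i, hi⟩) : ℝ) - 1 else 0))
    (μplus : ℝ)
    (hμplus : μplus = (∑ j : Fin n, if t + 1 ≤ c j then (c j : ℝ) - 1 else 0) / n)
    (σplus2 : ℝ)
    (hσplus2 : σplus2 =
      (∑ j : Fin n, if t + 1 ≤ c j then (c j : ℝ) * ((c j : ℝ) - 1) else 0) / n)
    (s : ℕ) (hs2 : 2 * s ≤ n)
    (ε a : ℝ) (hε : 0 < ε) (ha : 0 < a) :
    ((Finset.univ.filter (fun π : Equiv.Perm (Fin n) =>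
        ∃ i ≤ s, ε * a < |(i : ℝ) * μplus - R i π|)).card : ℝ) /
        (Nat.factorial n : ℝ)
      ≤ 16 * (s : ℝ) * σplus2 / (ε ^ 2 * a ^ 2) := by
  set f : Fin n → ℝ := fun j => if t + 1 ≤ c j then (c j : ℝ) - 1 else 0
  set h : Fin n → ℝ := fun j => f j - μplus
  have hh : ∑ j, h j = 0 := by
    simp only [h, sum_sub_distrib, sum_const, card_univ, Fintype.card_fin, nsmul_eq_mul, hμplus]
    field_simp
    ring
  have hB : (univ.filter fun π : Perm (Fin n) => ∃ i ≤ s, ε * a < |(i : ℝ) * μplus - R i π|) =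
      univ.filter fun π => ∃ i ≤ s, ε * a < |prefixSum h i π| :=
    filter_congr fun π _ => exists_congr fun i => and_congr_right fun his => by
      have hin : i ≤ n := by omega
      rw [eq_prefixSum_of_eq_add (f := f) hR0 hRstep hin, prefixSum_sub_const f μplus hin,
        abs_sub_comm]
  have hQ : (∑ j, h j ^ 2) / n ≤ σplus2 := by
    rw [hσplus2]
    gcongr ?_ / _
    exact (sum_sq_sub_le_sum_sq univ f hh).trans (sum_sq_truncated_le univ c t)
  rw [hB]
  calc _ ≤ 4 * s * ((∑ j, h j ^ 2) / n) / (ε * a) ^ 2 :=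
        card_filter_exists_lt_abs_prefixSum_div_le hh hn (mul_pos hε ha) hs2
    _ ≤ 16 * s * σplus2 / (ε ^ 2 * a ^ 2) := by
        rw [mul_pow]
        gcongr
        norm_num

open Classical in
/-- Truncated-sum model for sampling without replacement: under the uniform measure
on permutations, for every integer `1 ≤ s ≤ n/2` and all reals `ε > 0`, `a > 0`,
`P(max_{0 ≤ i ≤ s} |i μ⁺ - R_i| > ε a) ≤ 16 s (σ⁺)² / (ε² a²)`. -/
theorem stmt10 {n : ℕ} (hn : 1 ≤ n) (t : ℕ) (c : Fin n → ℕ)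
    (R : ℕ → Equiv.Perm (Fin n) → ℝ)
    (hR0 : ∀ π, R 0 π = 0)
    (hRstep : ∀ i (hi : i < n) (π : Equiv.Perm (Fin n)),
      R (i + 1) π = R i π +
        (if t + 1 ≤ c (π ⟨i, hi⟩) then (c (π ⟨i, hi⟩) : ℝ) - 1 else 0))
    (μplus : ℝ)
    (hμplus : μplus = (∑ j : Fin n, if t + 1 ≤ c j then (c j : ℝ) - 1 else 0) / n)
    (σplus2 : ℝ)
    (hσplus2 : σplus2 =
      (∑ j : Fin n, if t + 1 ≤ c j then (c j : ℝ) * ((c j : ℝ) - 1) else 0) / n)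
    (s : ℕ) (hs1 : 1 ≤ s) (hs2 : 2 * s ≤ n)
    (ε a : ℝ) (hε : 0 < ε) (ha : 0 < a) :
    ((Finset.univ.filter (fun π : Equiv.Perm (Fin n) =>
        ∃ i ≤ s, ε * a < |(i : ℝ) * μplus - R i π|)).card : ℝ) /
        (Nat.factorial n : ℝ)
      ≤ 16 * (s : ℝ) * σplus2 / (ε ^ 2 * a ^ 2) :=
  stmt10_general hn t c R hR0 hRstep μplus hμplus σplus2 hσplus2 s hs2 ε a hε ha
end
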